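/- arXiv:1802.06660 — 10 statements merged into one kernel-verified Lean document; each statement's English description precedes it below -/
import Mathlib

section
/- A nonnegative integer r×c matrix H is a histogram of degree s if and only if H is a sum of s simple histograms. -/
/-- A nonnegative integer `r × c` matrix `H` is a histogram of degree `s` if `s > 0`,
every row of `H` sums to `s`, and for every `1 ≤ i < r` and `0 ≤ j < c` (here rendered
0-indexed) the sum of the first `j` entries of row `i` is at least the sum of the
first `j+1` entries of row `i+1`. -/
def IsHistogram {r c : ℕ} (H : Matrix (Fin r) (Fin c) ℤ) (s : ℕ) : Prop :=
  0 < s ∧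
  (∀ i j, 0 ≤ H i j) ∧
  (∀ i, ∑ j, H i j = (s : ℤ)) ∧
  ∀ (i j : ℕ) (hi : i + 1 < r), j < c →
    ∑ l ∈ Finset.univ.filter (fun l : Fin c => (l : ℕ) < j + 1), H ⟨i + 1, hi⟩ l ≤
      ∑ l ∈ Finset.univ.filter (fun l : Fin c => (l : ℕ) < j), H ⟨i, Nat.lt_of_succ_lt hi⟩ l

namespace HistAux

variable {r c : ℕ}

/-- Prefix sums of a row. -/
def Pre (H : Matrix (Fin r) (Fin c) ℤ) (i : Fin r) (j : ℕ) : ℤ :=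
  ∑ l ∈ Finset.univ.filter (fun l : Fin c => (l : ℕ) < j), H i l

lemma isHistogram_iff_pre (H : Matrix (Fin r) (Fin c) ℤ) (s : ℕ) :
    IsHistogram H s ↔
      0 < s ∧ (∀ i j, 0 ≤ H i j) ∧ (∀ i, ∑ j, H i j = (s : ℤ)) ∧
      ∀ (i j : ℕ) (hi : i + 1 < r), j < c →
        Pre H ⟨i + 1, hi⟩ (j + 1) ≤ Pre H ⟨i, Nat.lt_of_succ_lt hi⟩ j := Iff.rfl

lemma Pre_mono {H : Matrix (Fin r) (Fin c) ℤ} (hpos : ∀ i j, 0 ≤ H i j)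
    (i : Fin r) {j j' : ℕ} (h : j ≤ j') : Pre H i j ≤ Pre H i j' := by
  apply Finset.sum_le_sum_of_subset_of_nonneg
  · intro l hl
    simp only [Finset.mem_filter, Finset.mem_univ, true_and] at *
    omega
  · intro l _ _
    exact hpos i l

lemma Pre_top (H : Matrix (Fin r) (Fin c) ℤ) (i : Fin r) : Pre H i c = ∑ j, H i j := by
  unfold Pre
  congr 1
  ext l
  simp [l.is_lt]

lemma Pre_succ (H : Matrix (Fin r) (Fin c) ℤ) (i : Fin r) {j : ℕ} (h : j < c) :
    Pre H i (j + 1) = Pre H i j + H i ⟨j, h⟩ := by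
  unfold Pre
  have hins : Finset.univ.filter (fun l : Fin c => (l : ℕ) < j + 1)
      = insert (⟨j, h⟩ : Fin c) (Finset.univ.filter (fun l : Fin c => (l : ℕ) < j)) := by
    ext l
    simp [Fin.ext_iff]
    omega
  rw [hins, Finset.sum_insert (by simp)]
  ring

lemma Pre_sub (H T : Matrix (Fin r) (Fin c) ℤ) (i : Fin r) (j : ℕ) :
    Pre (H - T) i j = Pre H i j - Pre T i j := by
  unfold Pre
  simp [Matrix.sub_apply, Finset.sum_sub_distrib]

lemma Pre_sum {n : ℕ} (S : Fin n → Matrix (Fin r) (Fin c) ℤ) (i : Fin r) (j : ℕ) :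
    Pre (∑ t, S t) i j = ∑ t, Pre (S t) i j := by
  unfold Pre
  simp only [Finset.sum_apply, Matrix.sum_apply]
  rw [Finset.sum_comm]

lemma extract (H : Matrix (Fin r) (Fin c) ℤ) (s : ℕ) (hs : 0 < s)
    (hH : IsHistogram H (s + 1)) :
    ∃ T : Matrix (Fin r) (Fin c) ℤ, IsHistogram T 1 ∧ IsHistogram (H - T) s := by
  rw [isHistogram_iff_pre] at hH
  obtain ⟨-, hpos, hrow, hstair⟩ := hH
  have hex : ∀ i : Fin r, ∃ j, j < c ∧ Pre H i (j + 1) = ((s : ℤ) + 1) := by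
    intro i
    have hc : 0 < c := by
      by_contra hc
      have h0 : c = 0 := by omega
      have := hrow i
      subst h0
      simp at this
      omega
    refine ⟨c - 1, by omega, ?_⟩
    have hc1 : c - 1 + 1 = c := by omega
    rw [hc1, Pre_top]
    have := hrow i
    push_cast at this ⊢
    linarith
  set p : Fin r → ℕ := fun i => Nat.find (hex i) with hpdef
  have hpc : ∀ i, p i < c := fun i => (Nat.find_spec (hex i)).1
  have hptop : ∀ i, Pre H i (p i + 1) = ((s : ℤ) + 1) := fun i => (Nat.find_spec (hex i)).2
  have hple : ∀ i, Pre H i (p i) ≤ (s : ℤ) := by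
    intro i
    rcases hpi : p i with _ | k
    · have : Pre H i 0 = 0 := by
        unfold Pre
        simp
      rw [this]
      positivity
    · have hk : k < p i := by omega
      have hfail := Nat.find_min (hex i) hk
      have hkc : k < c := by have := hpc i; omega
      have hne : Pre H i (k + 1) ≠ ((s : ℤ) + 1) := fun h => hfail ⟨hkc, h⟩
      have hle : Pre H i (k + 1) ≤ ((s : ℤ) + 1) := by
        calc Pre H i (k + 1) ≤ Pre H i c := Pre_mono hpos i (by omega)
        _ = ((s : ℤ) + 1) := by
            rw [Pre_top]
            have := hrow i
            push_cast at this ⊢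
            linarith
      have := lt_of_le_of_ne hle hne
      linarith [Int.lt_add_one_iff.mp this]
  have hmono_le : ∀ (i : Fin r) (j : ℕ), j ≤ p i → Pre H i j ≤ (s : ℤ) :=
    fun i j hj => le_trans (Pre_mono hpos i hj) (hple i)
  have hPi : ∀ i, (1 : ℤ) ≤ H i ⟨p i, hpc i⟩ := by
    intro i
    have h0 := Pre_succ H i (hpc i)
    have h1 := hptop i
    have h2 := hple i
    linarith
  have hinc : ∀ (i : ℕ) (hi : i + 1 < r),
      p ⟨i, Nat.lt_of_succ_lt hi⟩ < p ⟨i + 1, hi⟩ := by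
    intro i hi
    by_contra hcon
    push_neg at hcon
    have h1 : Pre H ⟨i + 1, hi⟩ (p ⟨i + 1, hi⟩ + 1)
        ≤ Pre H ⟨i + 1, hi⟩ (p ⟨i, Nat.lt_of_succ_lt hi⟩ + 1) :=
      Pre_mono hpos _ (by omega)
    have h2 := hstair i (p ⟨i, Nat.lt_of_succ_lt hi⟩) hi (hpc _)
    have h3 := hple ⟨i, Nat.lt_of_succ_lt hi⟩
    have h4 := hptop ⟨i + 1, hi⟩
    linarith
  set T : Matrix (Fin r) (Fin c) ℤ := fun i l => if (l : ℕ) = p i then 1 else 0 with hTdef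
  have hPreT : ∀ (i : Fin r) (j : ℕ), Pre T i j = if p i < j then 1 else 0 := by
    intro i j
    unfold Pre
    by_cases h : p i < j
    · rw [Finset.sum_eq_single (⟨p i, hpc i⟩ : Fin c)]
      · simp [hTdef, h]
      · intro b _ hne
        have : (b : ℕ) ≠ p i := fun hb => hne (Fin.ext hb)
        simp [hTdef, this]
      · intro habs
        exact absurd (by simp [h]) habs
    · rw [Finset.sum_eq_zero, if_neg h]
      intro l hl
      simp only [Finset.mem_filter, Finset.mem_univ, true_and] at hl
      have : (l : ℕ) ≠ p i := by omega
      simp [hTdef, this]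
  have hTpos : ∀ i l, (0 : ℤ) ≤ T i l := by
    intro i l
    simp only [hTdef]
    split <;> norm_num
  have hTrow : ∀ i, ∑ l, T i l = (1 : ℤ) := by
    intro i
    rw [← Pre_top, hPreT]
    simp [hpc i]
  refine ⟨T, ?_, ?_⟩
  · rw [isHistogram_iff_pre]
    refine ⟨one_pos, hTpos, by simpa using hTrow, ?_⟩
    intro i j hi hj
    rw [hPreT, hPreT]
    have := hinc i hi
    by_cases h1 : p ⟨i, Nat.lt_of_succ_lt hi⟩ < j
    · have h2 : ¬ p ⟨i + 1, hi⟩ < j + 1 ∨ p ⟨i + 1, hi⟩ < j + 1 := by tauto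
      by_cases h3 : p ⟨i + 1, hi⟩ < j + 1 <;> simp [h1, h3]
    · have h2 : ¬ p ⟨i + 1, hi⟩ < j + 1 := by omega
      simp [h1, h2]
  · rw [isHistogram_iff_pre]
    refine ⟨hs, ?_, ?_, ?_⟩
    · intro i l
      rw [Matrix.sub_apply]
      by_cases h : (l : ℕ) = p i
      · have hl : l = ⟨p i, hpc i⟩ := Fin.ext h
        have := hPi i
        simp only [hTdef, if_pos h]
        rw [hl]
        linarith
      · simp only [hTdef, if_neg h]
        have := hpos i l
        linarith
    · intro i
      rw [← Pre_top, Pre_sub, Pre_top, Pre_top, hrow i, hTrow i]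
      push_cast
      ring
    · intro i j hi hj
      rw [Pre_sub, Pre_sub, hPreT, hPreT]
      have hst := hstair i j hi hj
      have hinc' := hinc i hi
      by_cases h1 : p ⟨i, Nat.lt_of_succ_lt hi⟩ < j
      · by_cases h2 : p ⟨i + 1, hi⟩ < j + 1
        · simp only [if_pos h1, if_pos h2]
          linarith
        · simp only [if_pos h1, if_neg h2]
          have ha : Pre H ⟨i + 1, hi⟩ (j + 1) ≤ (s : ℤ) := hmono_le _ _ (by omega)
          have hb : ((s : ℤ) + 1) ≤ Pre H ⟨i, Nat.lt_of_succ_lt hi⟩ j := by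
            have h3 := hptop ⟨i, Nat.lt_of_succ_lt hi⟩
            have h4 := Pre_mono hpos ⟨i, Nat.lt_of_succ_lt hi⟩
              (show p ⟨i, Nat.lt_of_succ_lt hi⟩ + 1 ≤ j by omega)
            linarith
          linarith
      · have h2 : ¬ p ⟨i + 1, hi⟩ < j + 1 := by omega
        simp only [if_neg h1, if_neg h2]
        linarith

lemma decomp : ∀ (s : ℕ) (H : Matrix (Fin r) (Fin c) ℤ), IsHistogram H s →
    ∃ S : Fin s → Matrix (Fin r) (Fin c) ℤ,
      (∀ t, IsHistogram (S t) 1) ∧ H = ∑ t, S t := by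
  intro s
  induction s with
  | zero => exact fun H hH => absurd hH.1 (lt_irrefl 0)
  | succ n ih =>
    intro H hH
    rcases Nat.eq_zero_or_pos n with hn | hn
    · subst hn
      exact ⟨fun _ => H, fun _ => hH, by simp⟩
    · obtain ⟨T, hT, hHT⟩ := extract H n hn hH
      obtain ⟨S', hS', hsum⟩ := ih (H - T) hHT
      refine ⟨Fin.cons T S', ?_, ?_⟩
      · intro t
        induction t using Fin.cases with
        | zero => simpa using hT
        | succ k => simpa using hS' k
      · rw [Fin.sum_cons, ← hsum]
        abel

end HistAux

/-- A nonnegative integer `r × c` matrix `H` is a histogram of degree `s`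
if and only if `H` is a sum of `s` simple histograms
(a simple histogram being a histogram of degree `1`). -/
theorem histogram_iff_sum_of_simple {r c : ℕ} (H : Matrix (Fin r) (Fin c) ℤ) (s : ℕ) :
    IsHistogram H s ↔
      0 < s ∧ ∃ S : Fin s → Matrix (Fin r) (Fin c) ℤ,
        (∀ t, IsHistogram (S t) 1) ∧ H = ∑ t, S t := by
  constructor
  · intro hH
    exact ⟨hH.1, HistAux.decomp s H hH⟩
  · rintro ⟨hs, S, hS, rfl⟩
    rw [HistAux.isHistogram_iff_pre]
    refine ⟨hs, ?_, ?_, ?_⟩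
    · intro i j
      rw [Matrix.sum_apply]
      exact Finset.sum_nonneg fun t _ => (hS t).2.1 i j
    · intro i
      simp only [Matrix.sum_apply]
      rw [Finset.sum_comm]
      have : ∀ t : Fin s, ∑ j, S t i j = (1 : ℤ) := by
        intro t
        simpa using (hS t).2.2.1 i
      simp [this]
    · intro i j hi hj
      rw [HistAux.Pre_sum, HistAux.Pre_sum]
      apply Finset.sum_le_sum
      intro t _
      exact ((HistAux.isHistogram_iff_pre (S t) 1).mp (hS t)).2.2.2 i j hi hj
end

section
/- In any r×c histogram H, one has H(i,j) = 0 for every pair of indices with j < i (in particular H(2,1) = 0, H(3,1) = H(3,2) = 0, etc.); consequently every histogram satisfies r ≤ c, i.e., its column dimension is at least its row dimension. -/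
/-- In any `r × c` histogram `H` one has (0-indexed) `H i j = 0` whenever `j < i`;
consequently every histogram satisfies `r ≤ c`. -/
theorem histogram_lower_triangle_zero_and_rows_le_cols {r c : ℕ}
    (H : Matrix (Fin r) (Fin c) ℤ) (s : ℕ) (h : IsHistogram H s) :
    (∀ (i : Fin r) (j : Fin c), (j : ℕ) < (i : ℕ) → H i j = 0) ∧ r ≤ c := by
  obtain ⟨hs, hpos, hrow, hstep⟩ := h
  have P : ∀ (i : ℕ) (hi : i < r),
      ∑ l ∈ Finset.univ.filter (fun l : Fin c => (l : ℕ) < i), H ⟨i, hi⟩ l = 0 := by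
    intro i
    induction i with
    | zero =>
      intro hi
      have : (Finset.univ.filter (fun l : Fin c => (l : ℕ) < 0)) = ∅ := by
        apply Finset.filter_false_of_mem
        intro x _
        omega
      rw [this, Finset.sum_empty]
    | succ i ih =>
      intro hi
      have hi' : i < r := Nat.lt_of_succ_lt hi
      have hIH := ih hi'
      have hic : i < c := by
        by_contra hge
        push_neg at hge
        have hfull : (Finset.univ.filter (fun l : Fin c => (l : ℕ) < i)) = Finset.univ := by
          apply Finset.filter_true_of_mem
          intro x _
          exact lt_of_lt_of_le x.isLt hge
        rw [hfull] at hIH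
        rw [hrow ⟨i, hi'⟩] at hIH
        omega
      have hle := hstep i i hi hic
      rw [hIH] at hle
      have hge : 0 ≤ ∑ l ∈ Finset.univ.filter (fun l : Fin c => (l : ℕ) < i + 1),
          H ⟨i + 1, hi⟩ l := Finset.sum_nonneg fun l _ => hpos _ _
      omega
  constructor
  · intro i j hji
    have hP := P i i.isLt
    have hzero := (Finset.sum_eq_zero_iff_of_nonneg (fun l _ => hpos ⟨i, i.isLt⟩ l)).mp hP
    have := hzero j (by simp [hji])
    simpa using this
  · by_contra hrc
    push_neg at hrc
    have hP := P c hrc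
    have hfull : (Finset.univ.filter (fun l : Fin c => (l : ℕ) < c)) = Finset.univ := by
      apply Finset.filter_true_of_mem
      intro x _
      exact x.isLt
    rw [hfull, hrow ⟨c, hrc⟩] at hP
    omega
end

section
/- For a d×c integer matrix M and a d×c' integer matrix N, N is a 0-extension of M if and only if N = M·S for some simple c×c' histogram S. -/
/-- `N` is a 0-extension of `M` if `N` is obtained from `M` by inserting additional zero
columns at arbitrary positions: there is a strictly monotone map of column indices along
which `N` agrees with `M`, all other columns of `N` being zero. -/
def IsZeroExt {d c c' : ℕ} (M : Matrix (Fin d) (Fin c) ℤ) (N : Matrix (Fin d) (Fin c') ℤ) :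
    Prop :=
  ∃ f : Fin c → Fin c', StrictMono f ∧
    (∀ i j, N i (f j) = M i j) ∧
    (∀ i j', (∀ j, f j ≠ j') → N i j' = 0)

open Finset

lemma exists_eq_pi_single_of_nonneg_of_sum_eq_one {ι : Type*} [Fintype ι] [DecidableEq ι]
    (v : ι → ℤ) (h0 : ∀ j, 0 ≤ v j) (h1 : ∑ j, v j = 1) : ∃ j, v = Pi.single j 1 := by
  obtain ⟨j, hj⟩ : ∃ j, v j ≠ 0 := by
    by_contra! h
    simp [h] at h1
  have hsplit := add_sum_erase univ v (mem_univ j)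
  have hrest : ∑ l ∈ univ.erase j, v l = 0 := by
    have hpos := (h0 j).lt_of_ne' hj
    have hrest_nonneg := sum_nonneg fun l (_ : l ∈ univ.erase j) => h0 l
    omega
  have hvj : v j = 1 := by omega
  refine ⟨j, funext fun l => ?_⟩
  rcases eq_or_ne l j with rfl | hl
  · simp [hvj]
  · rw [Pi.single_eq_of_ne hl]
    exact (sum_eq_zero_iff_of_nonneg fun l _ => h0 l).1 hrest l (mem_erase.2 ⟨hl, mem_univ l⟩)

lemma sum_filter_lt_pi_single {n : ℕ} (a : Fin n) (j : ℕ) :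
    ∑ l ∈ univ.filter (fun l : Fin n => (l : ℕ) < j), (Pi.single a 1 : Fin n → ℤ) l =
      if (a : ℕ) < j then 1 else 0 := by
  simp [sum_pi_single']

lemma Fin.strictMono_iff_lt_add_one {r : ℕ} {α : Type*} [Preorder α] {f : Fin r → α} :
    StrictMono f ↔ ∀ (i : ℕ) (hi : i + 1 < r), f ⟨i, Nat.lt_of_succ_lt hi⟩ < f ⟨i + 1, hi⟩ := by
  cases r with
  | zero => exact ⟨fun _ i hi => by omega, fun _ a => a.elim0⟩
  | succ n =>
    rw [Fin.strictMono_iff_lt_succ]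
    exact ⟨fun h i hi => h ⟨i, by omega⟩, fun h i => h i (by omega)⟩

lemma forall_indicator_le_iff_lt {n : ℕ} (x y : Fin n) :
    (∀ j < n, (if (y : ℕ) < j + 1 then (1 : ℤ) else 0) ≤ if (x : ℕ) < j then 1 else 0) ↔
      x < y := by
  refine ⟨fun h => ?_, fun hxy j _ => ?_⟩
  · have hcut := h y y.isLt
    rw [Fin.lt_def]
    split_ifs at hcut <;> omega
  · rw [Fin.lt_def] at hxy
    split_ifs <;> omega

def selectionMatrix {m n α : Type*} [DecidableEq n] [Zero α] [One α] (f : m → n) :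
    Matrix m n α :=
  Matrix.of fun k => Pi.single (f k) 1

section selectionMatrix

variable {l m n α : Type*} [Fintype m] [DecidableEq n] [NonAssocSemiring α]

lemma mul_selectionMatrix_apply (M : Matrix l m α) (f : m → n) (i : l) (j : n) :
    (M * (selectionMatrix f : Matrix m n α)) i j = ∑ k, if f k = j then M i k else 0 := by
  simp [Matrix.mul_apply, selectionMatrix, Pi.single_apply, eq_comm]

lemma mul_selectionMatrix_apply_self (M : Matrix l m α) {f : m → n} (hf : f.Injective)
    (i : l) (k : m) : (M * (selectionMatrix f : Matrix m n α)) i (f k) = M i k := by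
  rw [mul_selectionMatrix_apply, sum_eq_single k (fun k' _ hk' => if_neg (hf.ne hk')) (by simp)]
  exact if_pos rfl

lemma mul_selectionMatrix_apply_of_forall_ne (M : Matrix l m α) {f : m → n} {j : n}
    (hj : ∀ k, f k ≠ j) (i : l) : (M * (selectionMatrix f : Matrix m n α)) i j = 0 := by
  simp [mul_selectionMatrix_apply, hj]

end selectionMatrix

lemma isZeroExt_iff {d c c' : ℕ} (M : Matrix (Fin d) (Fin c) ℤ) (N : Matrix (Fin d) (Fin c') ℤ) :
    IsZeroExt M N ↔ ∃ f : Fin c → Fin c', StrictMono f ∧ N = M * selectionMatrix f := by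
  refine ⟨fun ⟨f, hf, hagree, hzero⟩ => ⟨f, hf, ?_⟩, fun ⟨f, hf, hN⟩ => ?_⟩
  · refine Matrix.ext fun i j => ?_
    by_cases hj : ∃ k, f k = j
    · obtain ⟨k, rfl⟩ := hj
      exact (hagree i k).trans (mul_selectionMatrix_apply_self M hf.injective i k).symm
    · simp only [not_exists] at hj
      exact (hzero i j hj).trans (mul_selectionMatrix_apply_of_forall_ne M hj i).symm
  · subst hN
    exact ⟨f, hf, mul_selectionMatrix_apply_self M hf.injective,
      fun i _ hj => mul_selectionMatrix_apply_of_forall_ne M hj i⟩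

lemma isHistogram_selectionMatrix_one_iff {r c : ℕ} (f : Fin r → Fin c) :
    IsHistogram (selectionMatrix f) 1 ↔ StrictMono f := by
  have hprefix : ∀ (i : Fin r) (j : ℕ),
      ∑ l ∈ univ.filter (fun l : Fin c => (l : ℕ) < j), selectionMatrix (α := ℤ) f i l =
        if (f i : ℕ) < j then 1 else 0 :=
    fun i => sum_filter_lt_pi_single (f i)
  have hnonneg : ∀ i j, 0 ≤ selectionMatrix (α := ℤ) f i j := fun i =>
    (Pi.single_nonneg.2 zero_le_one : (0 : Fin c → ℤ) ≤ Pi.single (f i) 1)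
  have hsum : ∀ i, ∑ j, selectionMatrix (α := ℤ) f i j = 1 := fun i => by simp [selectionMatrix]
  rw [Fin.strictMono_iff_lt_add_one]
  simp only [IsHistogram, hprefix]
  exact ⟨fun ⟨_, _, _, h⟩ i hi => (forall_indicator_le_iff_lt _ _).1 fun j hj => h i j hi hj,
    fun h => ⟨one_pos, hnonneg, hsum,
      fun i j hi hj => (forall_indicator_le_iff_lt _ _).2 (h i hi) j hj⟩⟩

lemma isHistogram_one_iff {r c : ℕ} (S : Matrix (Fin r) (Fin c) ℤ) :
    IsHistogram S 1 ↔ ∃ f : Fin r → Fin c, StrictMono f ∧ S = selectionMatrix f := by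
  refine ⟨fun hS => ?_, fun ⟨f, hf, hS⟩ => hS ▸ (isHistogram_selectionMatrix_one_iff f).2 hf⟩
  have ⟨_, hnonneg, hsum, _⟩ := hS
  choose f hf using fun k =>
    exists_eq_pi_single_of_nonneg_of_sum_eq_one (S k) (hnonneg k) (hsum k)
  have hS' : S = selectionMatrix f := funext hf
  exact ⟨f, (isHistogram_selectionMatrix_one_iff f).1 (hS' ▸ hS), hS'⟩

/-- For a `d × c` integer matrix `M` and a `d × c'` integer matrix `N`, `N` is a
0-extension of `M` if and only if `N = M * S` for some simple `c × c'` histogram `S`. -/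
theorem zeroExt_iff_mul_simple_histogram {d c c' : ℕ}
    (M : Matrix (Fin d) (Fin c) ℤ) (N : Matrix (Fin d) (Fin c') ℤ) :
    IsZeroExt M N ↔ ∃ S : Matrix (Fin c) (Fin c') ℤ, IsHistogram S 1 ∧ N = M * S := by
  rw [isZeroExt_iff]
  constructor
  · rintro ⟨f, hf, rfl⟩
    exact ⟨selectionMatrix f, (isHistogram_selectionMatrix_one_iff f).2 hf, rfl⟩
  · rintro ⟨S, hS, rfl⟩
    obtain ⟨f, hf, rfl⟩ := (isHistogram_one_iff S).1 hS
    exact ⟨f, hf, rfl⟩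
end

section
/- Any j-smear of a histogram is a histogram of the same degree: if H is an r×c histogram of degree s and H' is a nonnegative r×(c+1) matrix with H'(_,l) = H(_,l) for l < j, H'(_,j) + H'(_,j+1) = H(_,j), and H'(_,l+1) = H(_,l) for l > j, then H' is a histogram of degree s. -/
/-- Extension of a function on `Fin n` to `ℕ` by zero. -/
def extZ {n : ℕ} (f : Fin n → ℤ) (k : ℕ) : ℤ := if h : k < n then f ⟨k, h⟩ else 0

lemma sum_filter_lt {n : ℕ} (f : Fin n → ℤ) (m : ℕ) :
    ∑ l ∈ Finset.univ.filter (fun l : Fin n => (l : ℕ) < m), f l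
      = ∑ k ∈ Finset.range m, extZ f k := by
  rw [Finset.sum_filter]
  have h1 : ∑ l : Fin n, (if (l : ℕ) < m then f l else 0)
      = ∑ k ∈ Finset.range n, (if k < m then extZ f k else 0) := by
    rw [← Fin.sum_univ_eq_sum_range]
    refine Finset.sum_congr rfl fun l _ => ?_
    simp [extZ, l.isLt]
  rw [h1]
  have h2 : ∑ k ∈ Finset.range m, extZ f k
      = ∑ k ∈ Finset.range m, (if k < m then extZ f k else 0) := by
    refine Finset.sum_congr rfl fun k hk => ?_
    rw [if_pos (Finset.mem_range.mp hk)]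
  rw [h2]
  have hz : ∀ k, (n ≤ k ∨ m ≤ k) → (if k < m then extZ f k else 0) = 0 := by
    intro k hk
    rcases hk with h | h
    · split
      · simp [extZ, Nat.not_lt.mpr h]
      · rfl
    · rw [if_neg (Nat.not_lt.mpr h)]
  calc ∑ k ∈ Finset.range n, (if k < m then extZ f k else 0)
      = ∑ k ∈ Finset.range (max n m), (if k < m then extZ f k else 0) :=
        Finset.sum_subset (Finset.range_subset_range.mpr (le_max_left _ _))
          (fun k _ hk => hz k (Or.inl (Nat.le_of_not_lt (fun h => hk (Finset.mem_range.mpr h)))))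
    _ = ∑ k ∈ Finset.range m, (if k < m then extZ f k else 0) :=
        (Finset.sum_subset (Finset.range_subset_range.mpr (le_max_right _ _))
          (fun k _ hk => hz k (Or.inr (Nat.le_of_not_lt (fun h => hk (Finset.mem_range.mpr h)))))).symm

lemma sum_univ_extZ {n : ℕ} (f : Fin n → ℤ) :
    ∑ l, f l = ∑ k ∈ Finset.range n, extZ f k := by
  rw [← Fin.sum_univ_eq_sum_range]
  exact Finset.sum_congr rfl fun l _ => by simp [extZ, l.isLt]

/-- Any `j`-smear of a histogram is a histogram of the same degree: if `H` is an `r × c`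
histogram of degree `s` and `H'` is a nonnegative `r × (c+1)` matrix which agrees with
`H` on columns before `j`, whose columns `j` and `j+1` sum to column `j` of `H`, and
which agrees (shifted by one) with `H` on columns after `j`, then `H'` is a histogram of
degree `s`. -/
theorem smear_of_histogram {r c : ℕ} (H : Matrix (Fin r) (Fin c) ℤ)
    (H' : Matrix (Fin r) (Fin (c + 1)) ℤ) (s : ℕ) (j : Fin c)
    (hH : IsHistogram H s)
    (hnn : ∀ i l, 0 ≤ H' i l)
    (hlt : ∀ i (l : Fin c), (l : ℕ) < (j : ℕ) → H' i (Fin.castSucc l) = H i l)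
    (hj : ∀ i, H' i (Fin.castSucc j) + H' i (Fin.succ j) = H i j)
    (hgt : ∀ i (l : Fin c), (j : ℕ) < (l : ℕ) → H' i (Fin.succ l) = H i l) :
    IsHistogram H' s := by
  obtain ⟨hs, hpos, hsum, hmono⟩ := hH
  have hjc : (j : ℕ) < c := j.isLt
  have hg'_nn : ∀ i k, 0 ≤ extZ (H' i) k := by
    intro i k
    unfold extZ
    split
    · exact hnn _ _
    · exact le_rfl
  have hA : ∀ i k, k < (j:ℕ) → extZ (H' i) k = extZ (H i) k := by
    intro i k hk
    have hkc : k < c := hk.trans hjc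
    have h := hlt i ⟨k, hkc⟩ hk
    simp only [extZ, dif_pos hkc, dif_pos (Nat.lt_succ_of_lt hkc)]
    rw [← h]
    rfl
  have hB : ∀ i, extZ (H' i) (j:ℕ) + extZ (H' i) ((j:ℕ)+1) = extZ (H i) (j:ℕ) := by
    intro i
    have h := hj i
    simp only [extZ, dif_pos hjc, dif_pos (Nat.lt_succ_of_lt hjc),
      dif_pos (Nat.succ_lt_succ hjc), Fin.eta]
    rw [← h]
    rfl
  have hC : ∀ i k, (j:ℕ) < k → extZ (H' i) (k+1) = extZ (H i) k := by
    intro i k hk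
    by_cases hkc : k < c
    · have h := hgt i ⟨k, hkc⟩ hk
      simp only [extZ, dif_pos hkc, dif_pos (Nat.succ_lt_succ hkc)]
      rw [← h]
      rfl
    · simp [extZ, hkc, Nat.succ_lt_succ_iff]
  have L1 : ∀ i m, m ≤ (j:ℕ) →
      ∑ k ∈ Finset.range m, extZ (H' i) k = ∑ k ∈ Finset.range m, extZ (H i) k := by
    intro i m hm
    exact Finset.sum_congr rfl fun k hk =>
      hA i k (lt_of_lt_of_le (Finset.mem_range.mp hk) hm)
  have L3 : ∀ i m, (j:ℕ) + 1 ≤ m →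
      ∑ k ∈ Finset.range (m+1), extZ (H' i) k = ∑ k ∈ Finset.range m, extZ (H i) k := by
    intro i m hm
    induction m, hm using Nat.le_induction with
    | base =>
        rw [Finset.sum_range_succ, Finset.sum_range_succ, Finset.sum_range_succ,
          L1 i _ le_rfl, add_assoc, hB i]
    | succ m hm ih =>
        rw [Finset.sum_range_succ, ih, Finset.sum_range_succ, hC i m (Nat.lt_of_succ_le hm)]
  have L4 : ∀ i k, k ≤ (j:ℕ) → extZ (H' i) k ≤ extZ (H i) k := by
    intro i k hk
    rcases lt_or_eq_of_le hk with h | h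
    · exact (hA i k h).le
    · subst h
      rw [← hB i]
      exact le_add_of_nonneg_right (hg'_nn i _)
  have L5 : ∀ i k, (j:ℕ) ≤ k →
      ∑ l ∈ Finset.range k, extZ (H i) l ≤ ∑ l ∈ Finset.range (k+1), extZ (H' i) l := by
    intro i k hk
    rcases eq_or_lt_of_le hk with h | h
    · subst h
      rw [Finset.sum_range_succ, L1 i _ le_rfl]
      exact le_add_of_nonneg_right (hg'_nn i _)
    · exact le_of_eq (L3 i k h).symm
  have hM : ∀ (i k : ℕ) (hi : i+1 < r), k < c →
      ∑ l ∈ Finset.range (k+1), extZ (H ⟨i+1, hi⟩) l ≤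
        ∑ l ∈ Finset.range k, extZ (H ⟨i, Nat.lt_of_succ_lt hi⟩) l := by
    intro i k hi hk
    have h := hmono i k hi hk
    rwa [sum_filter_lt, sum_filter_lt] at h
  refine ⟨hs, hnn, ?_, ?_⟩
  · intro i
    rw [sum_univ_extZ, L3 i c hjc, ← sum_univ_extZ]
    exact hsum i
  · intro i m hi hm
    rw [sum_filter_lt, sum_filter_lt]
    by_cases hmj : m ≤ (j:ℕ)
    · calc ∑ l ∈ Finset.range (m+1), extZ (H' ⟨i+1, hi⟩) l
          ≤ ∑ l ∈ Finset.range (m+1), extZ (H ⟨i+1, hi⟩) l :=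
            Finset.sum_le_sum fun k hk =>
              L4 _ k ((Nat.lt_succ_iff.mp (Finset.mem_range.mp hk)).trans hmj)
        _ ≤ ∑ l ∈ Finset.range m, extZ (H ⟨i, Nat.lt_of_succ_lt hi⟩) l :=
            hM i m hi (hmj.trans_lt hjc)
        _ = ∑ l ∈ Finset.range m, extZ (H' ⟨i, Nat.lt_of_succ_lt hi⟩) l :=
            (L1 _ m hmj).symm
    · push_neg at hmj
      match m, hm with
      | k+1, hm =>
        calc ∑ l ∈ Finset.range (k+1+1), extZ (H' ⟨i+1, hi⟩) l
            = ∑ l ∈ Finset.range (k+1), extZ (H ⟨i+1, hi⟩) l := L3 _ (k+1) (by omega)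
          _ ≤ ∑ l ∈ Finset.range k, extZ (H ⟨i, Nat.lt_of_succ_lt hi⟩) l :=
              hM i k hi (by omega)
          _ ≤ ∑ l ∈ Finset.range (k+1), extZ (H' ⟨i, Nat.lt_of_succ_lt hi⟩) l :=
              L5 _ k (by omega)
end

section
/- Let H be an r×c histogram of degree s ≥ 2, and for each row i let f(i) be the least column index j with H(i,j) > 0. Then f is monotone, the simple histogram S induced by f (S(i,j) = 1 iff f(i) = j) satisfies S ≤ H entrywise, and H − S is a histogram of degree s − 1. -/
/-- The 0-1 matrix with exactly one `1` per row, namely in row `i` at position `f i`. -/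
def inducedMatrix {r c : ℕ} (f : Fin r → Fin c) : Matrix (Fin r) (Fin c) ℤ :=
  fun i j => if f i = j then 1 else 0

/-- Let `H` be an `r × c` histogram of degree `s ≥ 2`, and for each row `i` let `f i` be
the least column index `j` with `H i j > 0`. Then `f` is monotone, the simple histogram
`S` induced by `f` (with `S i j = 1` iff `f i = j`) satisfies `S ≤ H` entrywise, and
`H - S` is a histogram of degree `s - 1`. -/
theorem extract_simple_histogram {r c : ℕ} (H : Matrix (Fin r) (Fin c) ℤ) (s : ℕ)
    (hs : 2 ≤ s) (hH : IsHistogram H s) (f : Fin r → Fin c)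
    (hf : ∀ i, 0 < H i (f i) ∧ ∀ j : Fin c, j < f i → H i j = 0) :
    Monotone f ∧ (∀ i j, inducedMatrix f i j ≤ H i j) ∧
      IsHistogram (H - inducedMatrix f) (s - 1) := by
  obtain ⟨hs0, hpos, hrow, hpref⟩ := hH
  have hone : ∀ i, (1:ℤ) ≤ H i (f i) := fun i => (hf i).1
  have hSle : ∀ i j, inducedMatrix f i j ≤ H i j := by
    intro i j
    unfold inducedMatrix
    by_cases h : f i = j
    · subst h; simpa using hone i
    · simp [h, hpos i j]
  have hSpref : ∀ (i : Fin r) (j : ℕ),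
      ∑ l ∈ Finset.univ.filter (fun l : Fin c => (l:ℕ) < j), inducedMatrix f i l
        = if (f i : ℕ) < j then 1 else 0 := by
    intro i j
    unfold inducedMatrix
    rw [Finset.sum_ite_eq]
    simp
  have hzero : ∀ (i : Fin r) (j : ℕ), j ≤ (f i : ℕ) →
      ∑ l ∈ Finset.univ.filter (fun l : Fin c => (l:ℕ) < j), H i l = 0 := by
    intro i j hj
    apply Finset.sum_eq_zero
    intro l hl
    simp only [Finset.mem_filter, Finset.mem_univ, true_and] at hl
    exact (hf i).2 l (Fin.lt_def.mpr (lt_of_lt_of_le hl hj))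
  have hge1 : ∀ (i : Fin r) (j : ℕ), (f i : ℕ) < j →
      1 ≤ ∑ l ∈ Finset.univ.filter (fun l : Fin c => (l:ℕ) < j), H i l := by
    intro i j hj
    calc (1:ℤ) ≤ H i (f i) := hone i
      _ ≤ _ := Finset.single_le_sum (fun l _ => hpos i l)
        (by simp [Finset.mem_filter, hj])
  have hadj : ∀ (i : ℕ) (hi : i + 1 < r),
      f ⟨i, Nat.lt_of_succ_lt hi⟩ < f ⟨i+1, hi⟩ := by
    intro i hi
    by_contra h
    push_neg at h
    have h1 := hpref i (f ⟨i+1,hi⟩ : ℕ) hi (f ⟨i+1,hi⟩).2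
    have h2 : (1:ℤ) ≤ ∑ l ∈ Finset.univ.filter
        (fun l : Fin c => (l:ℕ) < (f ⟨i+1,hi⟩ : ℕ) + 1), H ⟨i+1,hi⟩ l :=
      hge1 ⟨i+1,hi⟩ ((f ⟨i+1,hi⟩ : ℕ)+1) (by omega)
    have h3 : ∑ l ∈ Finset.univ.filter
        (fun l : Fin c => (l:ℕ) < (f ⟨i+1,hi⟩ : ℕ)), H ⟨i, Nat.lt_of_succ_lt hi⟩ l = 0 :=
      hzero _ _ (Fin.le_def.mp h)
    rw [h3] at h1
    linarith
  have hmono : Monotone f := by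
    have key : ∀ (k : ℕ) (a b : Fin r), (b : ℕ) = (a : ℕ) + k → f a ≤ f b := by
      intro k
      induction k with
      | zero => intro a b hab; have : a = b := Fin.ext (by omega); subst this; exact le_refl _
      | succ n ih =>
        intro a b hab
        have hb : (a : ℕ) + n + 1 < r := by omega
        have h1 : f a ≤ f ⟨(a : ℕ) + n, Nat.lt_of_succ_lt hb⟩ := ih a _ rfl
        have h2 := hadj ((a : ℕ) + n) hb
        have : (⟨(a:ℕ) + n + 1, hb⟩ : Fin r) = b := Fin.ext (by simp only [Fin.val_mk]; omega)
        rw [this] at h2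
        exact h1.trans h2.le
    intro a b hab
    exact key ((b : ℕ) - (a : ℕ)) a b (by omega)
  refine ⟨hmono, hSle, by omega, ?_, ?_, ?_⟩
  · intro i j
    simp only [Matrix.sub_apply, sub_nonneg]
    exact hSle i j
  · intro i
    have h1 : ∑ j, inducedMatrix f i j = 1 := by
      unfold inducedMatrix
      rw [Finset.sum_ite_eq]
      simp
    simp only [Matrix.sub_apply]
    rw [Finset.sum_sub_distrib, hrow i, h1]
    push_cast [Nat.cast_sub (by omega : 1 ≤ s)]
    ring
  · intro i j hi hj
    simp only [Matrix.sub_apply]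
    rw [Finset.sum_sub_distrib, Finset.sum_sub_distrib, hSpref, hSpref]
    have h1 := hpref i j hi hj
    have hlt := hadj i hi
    rw [Fin.lt_def] at hlt
    by_cases h0 : (f ⟨i, Nat.lt_of_succ_lt hi⟩ : ℕ) < j
    · have h0' : (f ⟨i+1, hi⟩ : ℕ) < j + 1 ↔ (f ⟨i+1, hi⟩ : ℕ) ≤ j := by omega
      by_cases h2 : (f ⟨i+1, hi⟩ : ℕ) < j + 1
      · simp only [h0, h2, if_true]
        linarith
      · have hA : ∑ l ∈ Finset.univ.filter (fun l : Fin c => (l:ℕ) < j + 1),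
            H ⟨i+1, hi⟩ l = 0 := hzero _ _ (by omega)
        have hB := hge1 ⟨i, Nat.lt_of_succ_lt hi⟩ j h0
        simp only [h0, h2, if_true, if_false]
        linarith
    · have h2 : ¬ (f ⟨i+1, hi⟩ : ℕ) < j + 1 ∨ (f ⟨i+1, hi⟩ : ℕ) < j + 1 := by tauto
      simp only [h0, if_false]
      split_ifs with h3
      · linarith
      · linarith
end

section
/- An integer data vector t is a ⊥-product of a finite set V of integer data vectors if and only if some 0-extension of the matrix M_t is a sum of 0-extensions of the finite set of matrices {M_v : v ∈ V}. -/
/-- `t` is a `⊥`-product of the set `V` of data vectors if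
`t = ∑ i, (v i) ∘ (ρ i)` for finitely many members `v i` of `V` (repetitions allowed)
and order-preserving bijections (data permutations) `ρ i` of `D`. -/
def IsPermProduct {D : Type*} [LinearOrder D] {d : ℕ}
    (t : D → Fin d → ℤ) (V : Set (D → Fin d → ℤ)) : Prop :=
  ∃ (m : ℕ) (v : Fin m → D → Fin d → ℤ) (ρ : Fin m → D ≃o D),
    (∀ i, v i ∈ V) ∧ t = ∑ i, (fun α => v i (ρ i α))

/-- The `d × c` matrix of a finitely supported data vector `v : D → ℤ^d` whose support
is `{α_1 < α_2 < … < α_c}`: its `(i, j)` entry is `v α_j i`. -/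
noncomputable def matrixOf {D : Type*} [LinearOrder D] {d : ℕ} (v : D → Fin d → ℤ)
    (hv : (Function.support v).Finite) :
    Matrix (Fin d) (Fin hv.toFinset.card) ℤ :=
  fun i j => v ((hv.toFinset.orderIsoOfFin rfl j : D)) i

namespace Order.PartialIso

variable {α β : Type*} [LinearOrder α] [LinearOrder β]

theorem exists_orderIso_extends [Countable α] [DenselyOrdered α] [NoMinOrder α] [NoMaxOrder α]
    [Nonempty α] [Countable β] [DenselyOrdered β] [NoMinOrder β] [NoMaxOrder β] [Nonempty β]
    (f : PartialIso α β) : ∃ e : α ≃o β, ∀ p ∈ f.val, e p.1 = p.2 := by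
  cases nonempty_encodable α
  cases nonempty_encodable β
  -- Cantor's back-and-forth argument, started from `f` instead of the empty partial isomorphism.
  let cofinals : α ⊕ β → Cofinal (PartialIso α β) := fun p ↦
    Sum.recOn p (definedAtLeft β) (definedAtRight α)
  let I : Ideal (PartialIso α β) := idealOfCofinals f cofinals
  let F a := funOfIdeal a I (cofinal_meets_idealOfCofinals _ cofinals (Sum.inl a))
  let G b := invOfIdeal b I (cofinal_meets_idealOfCofinals _ cofinals (Sum.inr b))
  refine ⟨OrderIso.ofCmpEqCmp (fun a ↦ (F a).val) (fun b ↦ (G b).val) fun a b ↦ ?_,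
    fun p hp ↦ ?_⟩
  · obtain ⟨g, hg, ha⟩ := (F a).prop
    obtain ⟨g', hg', hb⟩ := (G b).prop
    obtain ⟨m, -, hgm, hg'm⟩ := I.directed _ hg _ hg'
    exact m.prop (a, _) (hgm ha) (_, b) (hg'm hb)
  · obtain ⟨g, hg, hp₁⟩ := (F p.1).prop
    obtain ⟨m, -, hgm, hfm⟩ := I.directed _ hg _ (mem_idealOfCofinals f cofinals)
    have := m.prop (p.1, _) (hgm hp₁) p (hfm hp)
    rwa [cmp_self_eq_eq, eq_comm, cmp_eq_eq_iff] at this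

variable {ι : Type*} [Fintype ι] [LinearOrder ι]

def ofStrictMono {b : ι → α} {c : ι → β} (hb : StrictMono b) (hc : StrictMono c) :
    PartialIso α β :=
  ⟨Finset.univ.image fun k ↦ (b k, c k), by
    simp only [Finset.mem_image, Finset.mem_univ, true_and, forall_exists_index]
    rintro _ k rfl _ l rfl
    rw [hb.cmp_map_eq, hc.cmp_map_eq]⟩

end Order.PartialIso

theorem exists_orderIso_comp_eq {α β ι : Type*} [LinearOrder α] [LinearOrder β] [Fintype ι]
    [LinearOrder ι] [Countable α] [DenselyOrdered α] [NoMinOrder α] [NoMaxOrder α]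
    [Nonempty α] [Countable β] [DenselyOrdered β] [NoMinOrder β] [NoMaxOrder β] [Nonempty β]
    {b : ι → α} {c : ι → β} (hb : StrictMono b) (hc : StrictMono c) :
    ∃ e : α ≃o β, e ∘ b = c := by
  obtain ⟨e, he⟩ := (Order.PartialIso.ofStrictMono hb hc).exists_orderIso_extends
  exact ⟨e, funext fun k ↦ he (b k, c k) (Finset.mem_image_of_mem _ (Finset.mem_univ k))⟩

theorem exists_strictMono_comp_eq {D : Type*} [LinearOrder D] [Countable D] [DenselyOrdered D]
    [NoMinOrder D] [NoMaxOrder D] [Nonempty D] {c c' : ℕ} {e : Fin c → D} {f : Fin c → Fin c'}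
    (he : StrictMono e) (hf : StrictMono f) :
    ∃ g : Fin c' → D, StrictMono g ∧ g ∘ f = e := by
  obtain ⟨s, hs⟩ := Infinite.exists_subset_card_eq D c'
  let g₀ := s.orderEmbOfFin hs
  obtain ⟨ρ, hρ⟩ := exists_orderIso_comp_eq (g₀.strictMono.comp hf) he
  exact ⟨ρ ∘ g₀, ρ.strictMono.comp g₀.strictMono, hρ⟩

theorem Set.Finite.exists_strictMono_range_superset {D : Type*} [LinearOrder D] {s : Set D}
    (hs : s.Finite) : ∃ (c : ℕ) (g : Fin c → D), StrictMono g ∧ s ⊆ Set.range g :=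
  ⟨_, hs.toFinset.orderEmbOfFin rfl, (hs.toFinset.orderEmbOfFin rfl).strictMono, by simp⟩

section matrixAlong

open Function Set

variable {D : Type*} {d : ℕ}

def matrixAlong {c : ℕ} (v : D → Fin d → ℤ) (g : Fin c → D) : Matrix (Fin d) (Fin c) ℤ :=
  fun i j ↦ v (g j) i

theorem matrixOf_eq_matrixAlong [LinearOrder D] (v : D → Fin d → ℤ) (hv : (support v).Finite) :
    matrixOf v hv = matrixAlong v (hv.toFinset.orderEmbOfFin rfl) := by
  ext i j
  simp [matrixOf, matrixAlong, Finset.coe_orderIsoOfFin_apply]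

theorem matrixAlong_sum {m c : ℕ} (v : Fin m → D → Fin d → ℤ) (g : Fin c → D) :
    matrixAlong (∑ k, v k) g = ∑ k, matrixAlong (v k) g := by
  ext i j
  simp [matrixAlong, Finset.sum_apply, Matrix.sum_apply]

theorem eq_of_matrixAlong_eq {c : ℕ} {u v : D → Fin d → ℤ} {g : Fin c → D}
    (hu : support u ⊆ range g) (hv : support v ⊆ range g)
    (h : matrixAlong u g = matrixAlong v g) : u = v := by
  funext α
  by_cases hα : α ∈ range g
  · obtain ⟨j, rfl⟩ := hα
    funext i
    exact congrFun (congrFun h i) j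
  · rw [notMem_support.1 fun h ↦ hα (hu h), notMem_support.1 fun h ↦ hα (hv h)]

theorem support_comp_subset_range_iff {c : ℕ} (v : D → Fin d → ℤ) (e : D ≃ D)
    (g : Fin c → D) :
    support (fun α ↦ v (e α)) ⊆ range g ↔ support v ⊆ range (e ∘ g) := by
  constructor
  · intro h α hα
    obtain ⟨j, hj⟩ := h (show e.symm α ∈ support (fun α ↦ v (e α)) by simpa)
    exact ⟨j, by simp [hj]⟩
  · intro h α hα
    obtain ⟨j, hj⟩ := h hα
    exact ⟨j, e.injective hj⟩

end matrixAlong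

section zeroExt

open Function Set

variable {D : Type*} [LinearOrder D] {d : ℕ}

theorem matrixAlong_zeroExt_along (v : D → Fin d → ℤ) (hv : (support v).Finite)
    {c' : ℕ} {f : Fin hv.toFinset.card → Fin c'} {g : Fin c' → D} (hg : Injective g)
    (hgf : g ∘ f = hv.toFinset.orderEmbOfFin rfl) :
    (∀ i j, matrixAlong v g i (f j) = matrixOf v hv i j) ∧
      ∀ i j', (∀ j, f j ≠ j') → matrixAlong v g i j' = 0 := by
  refine ⟨fun i j ↦ ?_, fun i j' hj' ↦ ?_⟩
  · rw [matrixOf_eq_matrixAlong, ← hgf]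
    rfl
  · suffices g j' ∉ support v from congrFun (notMem_support.1 this) i
    intro hsupp
    rw [← hv.coe_toFinset, ← Finset.range_orderEmbOfFin _ rfl, ← hgf, range_comp] at hsupp
    obtain ⟨_, ⟨j, rfl⟩, hj⟩ := hsupp
    exact hj' j (hg hj)

theorem isZeroExt_matrixOf_matrixAlong (v : D → Fin d → ℤ) (hv : (support v).Finite) {c' : ℕ}
    {g : Fin c' → D} (hg : StrictMono g) (hsupp : support v ⊆ range g) :
    IsZeroExt (matrixOf v hv) (matrixAlong v g) := by
  set e := hv.toFinset.orderEmbOfFin rfl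
  choose f hf using fun j ↦ hsupp (hv.mem_toFinset.1 (Finset.orderEmbOfFin_mem _ rfl j))
  have hf_mono : StrictMono f := fun a b hab ↦
    hg.lt_iff_lt.1 (by rw [hf, hf]; exact e.strictMono hab)
  exact ⟨f, hf_mono, matrixAlong_zeroExt_along v hv hg.injective (funext hf)⟩

theorem exists_eq_matrixAlong_of_isZeroExt [Countable D] [DenselyOrdered D] [NoMinOrder D]
    [NoMaxOrder D] [Nonempty D] (v : D → Fin d → ℤ) (hv : (support v).Finite) {c' : ℕ}
    {N : Matrix (Fin d) (Fin c') ℤ} (h : IsZeroExt (matrixOf v hv) N) :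
    ∃ g : Fin c' → D, StrictMono g ∧ support v ⊆ range g ∧ N = matrixAlong v g := by
  obtain ⟨f, hf, hNf, hN0⟩ := h
  set e := hv.toFinset.orderEmbOfFin rfl
  obtain ⟨g, hg, hgf⟩ := exists_strictMono_comp_eq e.strictMono hf
  obtain ⟨hAf, hA0⟩ := matrixAlong_zeroExt_along v hv hg.injective hgf
  have hsupp : support v ⊆ range g := by
    rw [← hv.coe_toFinset, ← Finset.range_orderEmbOfFin _ rfl, ← hgf, range_comp]
    exact image_subset_range _ _
  refine ⟨g, hg, hsupp, ?_⟩
  ext i j'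
  by_cases hj' : ∃ j, f j = j'
  · obtain ⟨j, rfl⟩ := hj'
    rw [hNf, hAf]
  · push Not at hj'
    rw [hN0 i j' hj', hA0 i j' hj']

end zeroExt

theorem permProduct_iff_sum_of_zeroExt_general {D : Type*} [LinearOrder D] [Countable D]
    [DenselyOrdered D] [NoMinOrder D] [NoMaxOrder D] {d : ℕ}
    (t : D → Fin d → ℤ) (ht : (Function.support t).Finite)
    (V : Set (D → Fin d → ℤ))
    (hVs : ∀ v ∈ V, (Function.support v).Finite) :
    IsPermProduct t V ↔
      ∃ (c' : ℕ) (N : Matrix (Fin d) (Fin c') ℤ),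
        IsZeroExt (matrixOf t ht) N ∧
        ∃ (m : ℕ) (w : Fin m → D → Fin d → ℤ) (hw : ∀ i, w i ∈ V)
          (Ns : Fin m → Matrix (Fin d) (Fin c') ℤ),
          (∀ i, IsZeroExt (matrixOf (w i) (hVs (w i) (hw i))) (Ns i)) ∧
          N = ∑ i, Ns i := by
  constructor
  · rintro ⟨m, v, ρ, hv, rfl⟩
    obtain ⟨c, g, hg, hsub⟩ := (ht.union (Set.finite_iUnion fun k ↦
      (hVs _ (hv k)).preimage (ρ k).injective.injOn)).exists_strictMono_range_superset
    have hvg (k : Fin m) : Function.support (v k) ⊆ Set.range (ρ k ∘ g) :=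
      (support_comp_subset_range_iff _ (ρ k).toEquiv g).1
        ((Set.subset_iUnion _ k).trans (Set.subset_union_right.trans hsub))
    exact ⟨c, _, isZeroExt_matrixOf_matrixAlong _ ht hg (Set.subset_union_left.trans hsub),
      m, v, hv, _, fun k ↦ isZeroExt_matrixOf_matrixAlong _ _ ((ρ k).strictMono.comp hg) (hvg k),
      matrixAlong_sum _ _⟩
  · rintro ⟨c', N, hN, m, w, hw, Ns, hNs, hsum⟩
    cases isEmpty_or_nonempty D
    · exact ⟨0, Fin.elim0, Fin.elim0, Fin.rec0, Subsingleton.elim _ _⟩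
    obtain ⟨g, hg, htg, rfl⟩ := exists_eq_matrixAlong_of_isZeroExt t ht hN
    choose gs hgs hwgs hNgs using fun k ↦ exists_eq_matrixAlong_of_isZeroExt _ _ (hNs k)
    choose ρ hρ using fun k ↦ exists_orderIso_comp_eq hg (hgs k)
    refine ⟨m, w, ρ, hw, eq_of_matrixAlong_eq htg ?_ ?_⟩
    · rw [Finset.sum_fn]
      refine (Finset.support_sum _ _).trans (Set.iUnion₂_subset fun k _ ↦ ?_)
      exact (support_comp_subset_range_iff _ (ρ k).toEquiv g).2 (hρ k ▸ hwgs k)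
    · rw [hsum, matrixAlong_sum]
      refine Finset.sum_congr rfl fun k _ ↦ ?_
      rw [hNgs k, ← hρ k]
      rfl

/-- An integer data vector `t` is a `⊥`-product of a finite set `V` of integer data
vectors if and only if some 0-extension of the matrix `matrixOf t` is a sum of
0-extensions of the matrices `matrixOf v`, `v ∈ V`. -/
theorem permProduct_iff_sum_of_zeroExt {D : Type*} [LinearOrder D] [Countable D]
    [DenselyOrdered D] [NoMinOrder D] [NoMaxOrder D] {d : ℕ}
    (t : D → Fin d → ℤ) (ht : (Function.support t).Finite)
    (V : Set (D → Fin d → ℤ)) (hVfin : V.Finite)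
    (hVs : ∀ v ∈ V, (Function.support v).Finite) :
    IsPermProduct t V ↔
      ∃ (c' : ℕ) (N : Matrix (Fin d) (Fin c') ℤ),
        IsZeroExt (matrixOf t ht) N ∧
        ∃ (m : ℕ) (w : Fin m → D → Fin d → ℤ) (hw : ∀ i, w i ∈ V)
          (Ns : Fin m → Matrix (Fin d) (Fin c') ℤ),
          (∀ i, IsZeroExt (matrixOf (w i) (hVs (w i) (hw i))) (Ns i)) ∧
          N = ∑ i, Ns i :=
  permProduct_iff_sum_of_zeroExt_general t ht V hVs
end

section
/- Let (A, i, 0) be a vector addition system with A ⊆ ℤ^d finite, initial configuration i ∈ ℕ^d and final configuration 0, and let ī be any data spread of i. Then 0 is reachable from i in the VAS if and only if −ī is a finite sum of data realizations of vectors of A, i.e., −ī = ∑_{j=1}^{n} w_j where each w_j is a data realization of some a_j ∈ A. -/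
/-- A data spread of a nonnegative vector `a ∈ ℕ^d` is a finitely supported nonnegative
function `v : D → ℕ^d` whose values sum up to `a`. -/
def IsDataSpread {D : Type*} {d : ℕ} (v : D → Fin d → ℤ) (a : Fin d → ℤ) : Prop :=
  (Function.support v).Finite ∧ (∀ α x, 0 ≤ v α x) ∧ (∑ᶠ α, v α) = a

/-- A data realization of `a ∈ ℤ^d` is a data vector `v = s⁺ - s⁻` where `s⁺` is a data
spread of the positive part `a⁺` of `a`, `s⁻` is a data spread of the negative part
`a⁻`, and every element of the support of `s⁻` is strictly smaller than every element of
the support of `s⁺`. -/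
def IsDataRealization {D : Type*} [LinearOrder D] {d : ℕ}
    (v : D → Fin d → ℤ) (a : Fin d → ℤ) : Prop :=
  ∃ sp sm : D → Fin d → ℤ,
    IsDataSpread sp (fun x => max (a x) 0) ∧
    IsDataSpread sm (fun x => max (-(a x)) 0) ∧
    (∀ α ∈ Function.support sm, ∀ β ∈ Function.support sp, α < β) ∧
    v = sp - sm

/-- In the vector addition system given by a finite set `A ⊆ ℤ^d`, configuration `f` is
reachable from configuration `i ∈ ℕ^d` if there is a sequence `a 0, …, a (m-1)` of
elements of `A` whose total sum added to `i` gives `f` and all of whose partial sums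
added to `i` are nonnegative. -/
def VASReach {d : ℕ} (A : Set (Fin d → ℤ)) (i f : Fin d → ℤ) : Prop :=
  ∃ (m : ℕ) (a : Fin m → Fin d → ℤ),
    (∀ l, a l ∈ A) ∧
    (∀ j : ℕ, j ≤ m → ∀ x,
      0 ≤ i x + ∑ l ∈ Finset.univ.filter (fun l : Fin m => (l : ℕ) < j), a l x) ∧
    i + ∑ l, a l = f


section Helpers
open Function Finset


lemma finsum_pi_apply {D : Type*} {d : ℕ} (v : D → Fin d → ℤ)
    (h : (Function.support v).Finite) (x : Fin d) :
    (∑ᶠ α, v α) x = ∑ᶠ α, v α x := by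
  rw [finsum_eq_sum v h, Finset.sum_apply,
    finsum_eq_finset_sum_of_support_subset (f := fun α => v α x) (s := h.toFinset)]
  intro α hα
  simp only [Set.Finite.coe_toFinset, Function.mem_support]
  intro h0
  exact hα (by simp [h0])

lemma filter_cons_sum {M : Type*} [AddCommMonoid M] {m : ℕ} (k : ℕ) (f0 : M) (f : Fin m → M) :
    ∑ l ∈ Finset.univ.filter (fun l : Fin (m+1) => (l : ℕ) < k+1), (Fin.cons f0 f) l
    = f0 + ∑ l ∈ Finset.univ.filter (fun l : Fin m => (l : ℕ) < k), f l := by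
  rw [Finset.sum_filter, Finset.sum_filter, Fin.sum_univ_succ]
  simp [Fin.cons]

lemma exists_sub_scalar {D : Type*} [DecidableEq D] (s : Finset D) (g : D → ℤ)
    (hg : ∀ α, 0 ≤ g α) :
    ∀ b : ℤ, 0 ≤ b → b ≤ ∑ α ∈ s, g α →
    ∃ h : D → ℤ, (∀ α, 0 ≤ h α ∧ h α ≤ g α) ∧ (∀ α ∉ s, h α = 0) ∧ ∑ α ∈ s, h α = b := by
  induction s using Finset.induction_on with
  | empty =>
    intro b hb0 hbs
    simp only [Finset.sum_empty] at hbs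
    exact ⟨0, fun α => ⟨le_refl _, hg α⟩, fun _ _ => rfl, by simp [le_antisymm hbs hb0]⟩
  | @insert a s ha ih =>

    intro b hb0 hbs
    set t := min b (g a) with ht
    have ht0 : 0 ≤ t := le_min hb0 (hg a)
    have htg : t ≤ g a := min_le_right _ _
    have hbt0 : 0 ≤ b - t := by simp [ht]
    have hbts : b - t ≤ ∑ α ∈ s, g α := by
      rcases min_cases b (g a) with ⟨h1, h2⟩ | ⟨h1, h2⟩
      · rw [← h1] at ht
        have : 0 ≤ ∑ α ∈ s, g α := Finset.sum_nonneg fun α _ => hg α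
        omega
      · rw [← h1] at ht
        rw [Finset.sum_insert ha] at hbs
        omega
    obtain ⟨h', hh1, hh2, hh3⟩ := ih (b - t) hbt0 hbts
    refine ⟨fun β => if β = a then t else h' β, fun α => ?_, fun α hα => ?_, ?_⟩
    · by_cases h : α = a <;> simp [h, ht0, htg, hh1 α]
    · have h1 : α ≠ a := fun h => hα (h ▸ Finset.mem_insert_self a s)
      have h2 : α ∉ s := fun h => hα (Finset.mem_insert_of_mem h)
      simp [h1, hh2 α h2]
    · rw [Finset.sum_insert ha]
      simp only [if_pos rfl]
      have : ∑ β ∈ s, (if β = a then t else h' β) = ∑ β ∈ s, h' β :=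
        Finset.sum_congr rfl fun β hβ => by
          have : β ≠ a := fun h => ha (h ▸ hβ); simp [this]
      rw [this, hh3]; simp




lemma sum_eq_finsum {D : Type*} {d : ℕ} (v : D → Fin d → ℤ) (s : Finset D)
    (hsupp : ∀ α ∉ s, v α = 0) : (∑ᶠ α, v α) = ∑ α ∈ s, v α :=
  finsum_eq_finset_sum_of_support_subset v fun α hα => by
    by_contra h; exact hα (hsupp α h)

lemma exists_spread_le {D : Type*} {d : ℕ} (s : Finset D) (cbar : D → Fin d → ℤ)
    (hc : ∀ α x, 0 ≤ cbar α x) (hsupp : ∀ α ∉ s, cbar α = 0)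
    (b : Fin d → ℤ) (hb0 : ∀ x, 0 ≤ b x) (hb : ∀ x, b x ≤ ∑ α ∈ s, cbar α x) :
    ∃ sm : D → Fin d → ℤ, (∀ α x, 0 ≤ sm α x ∧ sm α x ≤ cbar α x) ∧
      (∀ α ∉ s, sm α = 0) ∧ (∑ᶠ α, sm α) = b := by
  classical
  have key : ∀ x : Fin d, ∃ h : D → ℤ, (∀ α, 0 ≤ h α ∧ h α ≤ cbar α x) ∧
      (∀ α ∉ s, h α = 0) ∧ ∑ α ∈ s, h α = b x := fun x => by
    have := exists_sub_scalar s (fun α => cbar α x) (fun α => hc α x) (b x) (hb0 x) ?_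
    · simpa using this
    · simpa using hb x
  choose h hh1 hh2 hh3 using key
  refine ⟨fun α x => h x α, fun α x => hh1 x α, fun α hα => funext fun x => hh2 x α hα, ?_⟩
  rw [sum_eq_finsum _ s (fun α hα => funext fun x => hh2 x α hα)]
  funext x
  rw [Finset.sum_apply]
  exact hh3 x

lemma vasReach_cons {d : ℕ} {A : Set (Fin d → ℤ)} {i a : Fin d → ℤ}
    (hi : ∀ x, 0 ≤ i x) (haA : a ∈ A) (h : VASReach A (i + a) 0) : VASReach A i 0 := by
  obtain ⟨m, as, h1, h2, h3⟩ := h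
  refine ⟨m + 1, Fin.cons a as, ?_, ?_, ?_⟩
  · intro l
    refine Fin.cases ?_ ?_ l
    · simpa using haA
    · intro k; simpa using h1 k
  · intro j hj x
    match j with
    | 0 => simpa using hi x
    | (k+1) =>
      have hc := congrFun (filter_cons_sum k a as) x
      rw [Finset.sum_apply, Pi.add_apply, Finset.sum_apply] at hc
      rw [hc]
      have := h2 k (by omega) x
      simp only [Pi.add_apply] at this
      omega
  · rw [Fin.sum_univ_succ]
    simp only [Fin.cons_zero, Fin.cons_succ, ← add_assoc]
    exact h3



lemma max_sub_max_neg (t : ℤ) : max t 0 - max (-t) 0 = t := by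
  rcases le_total t 0 with h | h <;> simp [max_eq_left, max_eq_right, h] <;> omega

lemma backward_aux {D : Type*} [LinearOrder D] {d : ℕ} (A : Set (Fin d → ℤ)) :
    ∀ (n : ℕ) (ibar : D → Fin d → ℤ), (Function.support ibar).Finite →
    (∀ α x, 0 ≤ ibar α x) →
    ∀ (w : Fin n → D → Fin d → ℤ) (a : Fin n → Fin d → ℤ),
    (∀ j, a j ∈ A ∧ IsDataRealization (w j) (a j)) →
    ibar + ∑ j, w j = 0 →
    VASReach A (∑ᶠ α, ibar α) 0 := by
  intro n
  induction n with
  | zero =>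
    intro ibar h1 h2 w a hw hsum
    simp only [Finset.univ_eq_empty, Finset.sum_empty, add_zero] at hsum
    subst hsum
    refine ⟨0, Fin.elim0, fun l => l.elim0, ?_, ?_⟩
    · intro j hj x
      simp [finsum_zero]
    · simp [finsum_zero]
  | succ n ih =>
    intro ibar h1 h2 w a hw hsum
    choose sp sm hsp hsm hord hweq using fun j => (hw j).2
    -- pointwise sum identity
    have hpt : ∀ α x, ibar α x + ∑ j, sp j α x - ∑ j, sm j α x = 0 := by
      intro α x
      have := congrFun (congrFun hsum α) x
      simp only [Pi.add_apply, Pi.zero_apply, Finset.sum_apply] at this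
      have hrw : ∀ j : Fin (n+1), w j α x = sp j α x - sm j α x := fun j => by
        rw [hweq j]; simp
      rw [Finset.sum_congr rfl (fun j _ => hrw j), Finset.sum_sub_distrib] at this
      omega
    -- find a step whose negative part fits in ibar
    have claim : ∃ j, ∀ α x, sm j α x ≤ ibar α x := by
      by_contra hcon
      push_neg at hcon
      choose αf xf hαx using hcon
      obtain ⟨j0, -, hj0⟩ := Finset.exists_min_image (Finset.univ : Finset (Fin (n+1)))
        αf ⟨0, Finset.mem_univ 0⟩
      set α := αf j0
      set x := xf j0
      have h3 : sm j0 α x ≤ ∑ j, sm j α x :=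
        Finset.single_le_sum (fun j _ => ((hsm j).2.1 α x)) (Finset.mem_univ j0)
      have h4 : 0 < ∑ j, sp j α x := by
        have := hpt α x
        have h5 : ibar α x < sm j0 α x := hαx j0
        have h6 := h2 α x
        omega
      obtain ⟨l, -, hl⟩ := Finset.exists_lt_of_sum_lt (by simpa using h4 :
        ∑ j : Fin (n+1), (0 : ℤ) < ∑ j, sp j α x)
      have hαsp : α ∈ Function.support (sp l) := by
        intro h0
        rw [h0] at hl; simp at hl
      have hαsm : αf l ∈ Function.support (sm l) := by
        simp only [Function.mem_support]
        intro h0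
        have h5 := hαx l
        have h6 := h2 (αf l) (xf l)
        rw [h0] at h5
        simp at h5
        omega
      exact absurd (hj0 l (Finset.mem_univ l)) (not_le.mpr (hord l (αf l) hαsm α hαsp))
    obtain ⟨j, hj⟩ := claim
    -- new initial spread
    set ibar' := ibar + w j with hibar'
    have hwjsupp : (Function.support (w j)).Finite := by
      apply Set.Finite.subset ((hsp j).1.union (hsm j).1)
      intro α hα
      by_contra h0
      simp only [Set.mem_union, Function.mem_support, not_or, not_not] at h0
      apply hα
      rw [hweq j]
      simp [h0.1, h0.2]
    have h1' : (Function.support ibar').Finite := by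
      apply Set.Finite.subset (h1.union hwjsupp)
      intro α hα
      by_contra h0
      simp only [Set.mem_union, Function.mem_support, not_or, not_not] at h0
      apply hα
      simp [hibar', h0.1, h0.2]
    have h2' : ∀ α x, 0 ≤ ibar' α x := by
      intro α x
      have hs := (hsp j).2.1 α x
      have := hj α x
      simp only [hibar', Pi.add_apply, hweq j, Pi.sub_apply]
      omega
    -- sum of w j
    have hwjsum : ∑ᶠ α, w j α = a j := by
      have hd : ∑ᶠ α, (sp j α - sm j α) = (∑ᶠ α, sp j α) - ∑ᶠ α, sm j α :=
        finsum_sub_distrib (hsp j).1 (hsm j).1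
      have : ∑ᶠ α, w j α = (∑ᶠ α, sp j α) - ∑ᶠ α, sm j α := by
        rw [← hd]
        apply finsum_congr
        intro α
        rw [hweq j]; rfl
      rw [this, (hsp j).2.2, (hsm j).2.2]
      funext x
      exact max_sub_max_neg (a j x)
    have hsum' : ∑ᶠ α, ibar' α = (∑ᶠ α, ibar α) + a j := by
      rw [← hwjsum]
      exact finsum_add_distrib h1 hwjsupp
    -- reorder: swap j to front
    set e := Equiv.swap (0 : Fin (n+1)) j with he
    have hrest : ibar' + ∑ k : Fin n, w (e k.succ) = 0 := by
      have : ∑ k : Fin (n+1), w (e k) = ∑ k, w k := Equiv.sum_comp e w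
      rw [Fin.sum_univ_succ] at this
      have he0 : e 0 = j := Equiv.swap_apply_left 0 j
      rw [he0] at this
      calc ibar' + ∑ k : Fin n, w (e k.succ)
          = ibar + (w j + ∑ k : Fin n, w (e k.succ)) := by rw [hibar']; ring
        _ = ibar + ∑ k, w k := by rw [this]
        _ = 0 := hsum
    have hreach := ih ibar' h1' h2' (fun k => w (e k.succ)) (fun k => a (e k.succ))
      (fun k => hw (e k.succ)) hrest
    rw [hsum'] at hreach
    refine vasReach_cons ?_ (hw j).1 hreach
    intro x
    rw [finsum_pi_apply ibar h1 x]
    exact finsum_nonneg fun α => h2 α x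





lemma filter_cons_sum_scalar {d m : ℕ} (k : ℕ) (a : Fin (m+1) → Fin d → ℤ) (x : Fin d) :
    ∑ l ∈ Finset.univ.filter (fun l : Fin (m+1) => (l : ℕ) < k+1), a l x
    = a 0 x + ∑ l ∈ Finset.univ.filter (fun l : Fin m => (l : ℕ) < k), a l.succ x := by
  have h : (fun l : Fin (m+1) => a l x) = Fin.cons (a 0 x) (fun l : Fin m => a l.succ x) :=
    funext fun l => Fin.cases rfl (fun k => rfl) l
  calc ∑ l ∈ Finset.univ.filter (fun l : Fin (m+1) => (l : ℕ) < k+1), a l x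
      = ∑ l ∈ Finset.univ.filter (fun l : Fin (m+1) => (l : ℕ) < k+1),
          Fin.cons (a 0 x) (fun l : Fin m => a l.succ x) l :=
        Finset.sum_congr rfl fun l _ => congrFun h l
    _ = _ := filter_cons_sum k _ _

lemma forward_aux {D : Type*} [LinearOrder D] [Nonempty D] [NoMaxOrder D] {d : ℕ}
    (A : Set (Fin d → ℤ)) :
    ∀ (m : ℕ) (c : Fin d → ℤ) (a : Fin m → Fin d → ℤ),
    (∀ l, a l ∈ A) →
    (∀ j : ℕ, j ≤ m → ∀ x,
      0 ≤ c x + ∑ l ∈ Finset.univ.filter (fun l : Fin m => (l : ℕ) < j), a l x) →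
    c + ∑ l, a l = 0 →
    ∀ cbar : D → Fin d → ℤ, IsDataSpread cbar c →
    ∃ (n : ℕ) (w : Fin n → D → Fin d → ℤ) (as : Fin n → Fin d → ℤ),
      (∀ j, as j ∈ A ∧ IsDataRealization (w j) (as j)) ∧ (-cbar) = ∑ j, w j := by
  intro m
  induction m with
  | zero =>
    intro c a ha hpartial hend cbar hcbar
    simp only [Finset.univ_eq_empty, Finset.sum_empty, add_zero] at hend
    subst hend
    have hz : cbar = 0 := by
      funext α x
      have h1 := hcbar.2.1 α x
      have h2 : cbar α x ≤ 0 := by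
        have hfin : (Function.support fun β => cbar β x).Finite :=
          hcbar.1.subset fun β hβ => by
            simp only [Function.mem_support] at hβ ⊢
            intro h0; exact hβ (by rw [h0]; rfl)
        have := single_le_finsum α hfin (fun β => hcbar.2.1 β x)
        rw [← finsum_pi_apply cbar hcbar.1 x, hcbar.2.2] at this
        simpa using this
      have : cbar α x = 0 := le_antisymm h2 h1
      simpa using this
    exact ⟨0, Fin.elim0, Fin.elim0, fun j => j.elim0, by simp [hz]⟩
  | succ m ih =>
    intro c a ha hpartial hend cbar hcbar
    -- basic facts
    have hc0 : ∀ x, 0 ≤ c x := by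
      intro x
      have := hpartial 0 (by omega) x
      simpa using this
    have hca0 : ∀ x, 0 ≤ c x + a 0 x := by
      intro x
      have := hpartial 1 (by omega) x
      rwa [filter_cons_sum_scalar 0 a x, Finset.filter_false_of_mem (by simp),
        Finset.sum_empty, add_zero] at this
    set bm : Fin d → ℤ := fun x => max (-(a 0 x)) 0 with hbm
    have hbmc : ∀ x, bm x ≤ c x := by
      intro x
      have := hc0 x; have := hca0 x
      simp only [hbm]
      omega
    classical
    set s : Finset D := hcbar.1.toFinset with hs
    have hcbar_supp : ∀ α ∉ s, cbar α = 0 := by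
      intro α hα
      by_contra h0
      exact hα (by simp [hs, Set.Finite.mem_toFinset, Function.mem_support, h0])
    have hsum_s : ∀ x, ∑ α ∈ s, cbar α x = c x := by
      intro x
      rw [← hcbar.2.2, finsum_pi_apply cbar hcbar.1 x,
        finsum_eq_finset_sum_of_support_subset]
      intro α hα
      simp only [Function.mem_support] at hα
      simp only [hs, Set.Finite.coe_toFinset, Function.mem_support]
      intro h0; exact hα (by rw [h0]; rfl)
    obtain ⟨sm, hsm1, hsm2, hsm3⟩ := exists_spread_le s cbar hcbar.2.1 hcbar_supp bm
      (fun x => le_max_right _ _) (fun x => (hsum_s x).symm ▸ hbmc x)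
    -- pick δ above s
    obtain ⟨u, hu⟩ := Finset.exists_le s
    obtain ⟨δ, hδ⟩ := exists_gt u
    have hsδ : ∀ β ∈ s, β < δ := fun β hβ => lt_of_le_of_lt (hu β hβ) hδ
    set sp : D → Fin d → ℤ := fun β => if β = δ then (fun x => max (a 0 x) 0) else 0
      with hsp
    have hsp_spread : IsDataSpread sp (fun x => max (a 0 x) 0) := by
      refine ⟨Set.Finite.subset (Set.finite_singleton δ) ?_, ?_, ?_⟩
      · intro β hβ
        simp only [Function.mem_support, hsp] at hβ
        by_contra h0
        simp only [Set.mem_singleton_iff] at h0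
        exact hβ (if_neg h0)
      · intro β x
        simp only [hsp]
        by_cases h0 : β = δ <;> simp [h0, le_max_right]
      · rw [finsum_eq_single sp δ (fun β hβ => by simp [hsp, if_neg hβ])]
        simp [hsp]
    have hsm_spread : IsDataSpread sm (fun x => max (-(a 0 x)) 0) := by
      refine ⟨Set.Finite.subset s.finite_toSet ?_, fun α x => (hsm1 α x).1, hsm3⟩
      intro β hβ
      simp only [Function.mem_support] at hβ
      by_contra h0
      exact hβ (hsm2 β h0)
    have hord : ∀ α ∈ Function.support sm, ∀ β ∈ Function.support sp, α < β := by
      intro α hα β hβ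
      have hαs : α ∈ s := by
        by_contra h0
        exact hα (hsm2 α h0)
      have hβδ : β = δ := by
        by_contra h0
        exact hβ (if_neg h0)
      rw [hβδ]
      exact hsδ α hαs
    -- new spread
    set cbar' : D → Fin d → ℤ := fun α => cbar α + sp α - sm α with hcbar'
    have hcbar'_spread : IsDataSpread cbar' (c + a 0) := by
      refine ⟨?_, ?_, ?_⟩
      · apply Set.Finite.subset (s.finite_toSet.union (Set.finite_singleton δ))
        intro α hα
        by_contra h0
        simp only [Set.mem_union, Set.mem_singleton_iff, not_or] at h0
        apply hα
        simp [hcbar', hcbar_supp α h0.1, hsm2 α h0.1, hsp, if_neg h0.2]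
      · intro α x
        have := (hsm1 α x).2
        have := hsp_spread.2.1 α x
        simp only [hcbar', Pi.add_apply, Pi.sub_apply]
        omega
      · have hfin1 : (Function.support fun α => cbar α + sp α).Finite := by
          apply Set.Finite.subset (hcbar.1.union hsp_spread.1)
          intro α hα
          by_contra h0
          simp only [Set.mem_union, Function.mem_support, not_or, not_not] at h0
          exact hα (by simp [h0.1, h0.2])
        have : ∑ᶠ α, cbar' α = (∑ᶠ α, (cbar α + sp α)) - ∑ᶠ α, sm α :=
          finsum_sub_distrib hfin1 hsm_spread.1
        rw [this, finsum_add_distrib hcbar.1 hsp_spread.1, hcbar.2.2, hsp_spread.2.2,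
          hsm3]
        funext x
        have := max_sub_max_neg (a 0 x)
        simp only [Pi.add_apply, Pi.sub_apply, hbm]
        omega
    -- apply IH to the tail
    have hend' : (c + a 0) + ∑ l, Fin.tail a l = 0 := by
      rw [Fin.sum_univ_succ] at hend
      rw [add_assoc]
      exact hend
    have hpartial' : ∀ j : ℕ, j ≤ m → ∀ x,
        0 ≤ (c + a 0) x + ∑ l ∈ Finset.univ.filter (fun l : Fin m => (l : ℕ) < j),
          Fin.tail a l x := by
      intro j hj x
      have := hpartial (j+1) (by omega) x
      rw [filter_cons_sum_scalar j a x] at this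
      simp only [Pi.add_apply, Fin.tail]
      omega
    obtain ⟨n, w', as', hw', hsum'⟩ := ih (c + a 0) (Fin.tail a)
      (fun l => ha l.succ) hpartial' hend' cbar' hcbar'_spread
    refine ⟨n + 1, Fin.cons (sp - sm) w', Fin.cons (a 0) as', ?_, ?_⟩
    · intro j
      refine Fin.cases ?_ ?_ j
      · exact ⟨ha 0, sp, sm, hsp_spread, hsm_spread, hord, rfl⟩
      · intro k
        simpa using hw' k
    · rw [Fin.sum_univ_succ]
      simp only [Fin.cons_zero, Fin.cons_succ]
      rw [← hsum']
      funext α x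
      simp only [hcbar', Pi.neg_apply, Pi.add_apply, Pi.sub_apply]
      ring
end Helpers

open Function Finset

/-- Let `(A, i, 0)` be a vector addition system with `A ⊆ ℤ^d` finite, initial
configuration `i ∈ ℕ^d` and final configuration `0`, and let `ī` be any data spread of
`i`. Then `0` is reachable from `i` in the VAS if and only if `-ī` is a finite sum of
data realizations of vectors of `A`. -/

theorem vasReach_iff_sum_of_dataRealizations {D : Type*} [LinearOrder D] [Countable D]
    [DenselyOrdered D] [NoMinOrder D] [NoMaxOrder D] {d : ℕ}
    (A : Set (Fin d → ℤ)) (hA : A.Finite)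
    (i : Fin d → ℤ) (hi : ∀ x, 0 ≤ i x)
    (ibar : D → Fin d → ℤ) (hibar : IsDataSpread ibar i) :
    VASReach A i 0 ↔
      ∃ (n : ℕ) (w : Fin n → D → Fin d → ℤ) (a : Fin n → Fin d → ℤ),
        (∀ j, a j ∈ A ∧ IsDataRealization (w j) (a j)) ∧
        (-ibar) = ∑ j, w j := by
  constructor
  · intro h
    rcases isEmpty_or_nonempty D with hD | hD
    · exact ⟨0, Fin.elim0, Fin.elim0, fun j => j.elim0,
        funext fun α => (IsEmpty.false α).elim⟩
    · obtain ⟨m, a, h1, h2, h3⟩ := h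
      exact forward_aux A m i a h1 h2 h3 ibar hibar
  · rintro ⟨n, w, a, hw, hsum⟩
    have h0 : ibar + ∑ j, w j = 0 := by
      rw [← hsum]
      simp
    have := backward_aux A n ibar hibar.1 hibar.2.1 w a hw h0
    rwa [hibar.2.2] at this
end

section
/- Let w_1, …, w_n be integer data vectors, each satisfying that every element of the support of its negative part is strictly smaller than every element of the support of its positive part (supp(w_i⁻) < supp(w_i⁺)). Define w_j to be an immediate consequence of w_i if supp(w_i⁺) ∩ supp(w_j⁻) ≠ ∅. Then the immediate consequence relation is acyclic: there is no cycle w_{i_1} → w_{i_2} → … → w_{i_k} → w_{i_1} (k ≥ 1), and hence the reflexive-transitive closure of immediate consequence is a partial order. -/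
/-- The positive part `w⁺` of a data vector, given pointwise by `max (w α x) 0`. -/
def dvPos {D : Type*} {d : ℕ} (w : D → Fin d → ℤ) : D → Fin d → ℤ :=
  fun α x => max (w α x) 0

/-- The negative part `w⁻` of a data vector, given pointwise by `max (-(w α x)) 0`. -/
def dvNeg {D : Type*} {d : ℕ} (w : D → Fin d → ℤ) : D → Fin d → ℤ :=
  fun α x => max (-(w α x)) 0

/-- `w j` is an immediate consequence of `w i` if the support of the positive part of
`w i` intersects the support of the negative part of `w j`. -/
def ImmCons {D : Type*} {d n : ℕ} (w : Fin n → D → Fin d → ℤ) (i j : Fin n) : Prop :=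
  (Function.support (dvPos (w i)) ∩ Function.support (dvNeg (w j))).Nonempty

/-- Let `w 0, …, w (n-1)` be integer data vectors, each satisfying that every element of
the support of its negative part is strictly smaller than every element of the support
of its positive part. Then the immediate consequence relation is acyclic — there is no
cycle `w i₁ → w i₂ → … → w iₖ → w i₁` with `k ≥ 1` — and hence its
reflexive-transitive closure is a partial order (reflexivity and transitivity being
automatic, antisymmetry is stated). -/
theorem immCons_acyclic {D : Type*} [LinearOrder D] [Countable D] [DenselyOrdered D]
    [NoMinOrder D] [NoMaxOrder D] {d n : ℕ}
    (w : Fin n → D → Fin d → ℤ) (hfin : ∀ i, (Function.support (w i)).Finite)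
    (hsupp : ∀ i, ∀ α ∈ Function.support (dvNeg (w i)),
      ∀ β ∈ Function.support (dvPos (w i)), α < β) :
    (¬ ∃ (k : ℕ) (cyc : Fin (k + 1) → Fin n), 0 < k ∧ cyc 0 = cyc (Fin.last k) ∧
        ∀ l : Fin k, ImmCons w (cyc l.castSucc) (cyc l.succ)) ∧
    (∀ i j : Fin n, Relation.ReflTransGen (ImmCons w) i j →
      Relation.ReflTransGen (ImmCons w) j i → i = j) := by
  have key : ∀ i j, Relation.TransGen (ImmCons w) i j →
      ∃ α β, α ∈ Function.support (dvPos (w i)) ∧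
        β ∈ Function.support (dvNeg (w j)) ∧ α ≤ β := by
    intro i j h
    induction h with
    | single hij =>
      obtain ⟨α, hα⟩ := hij
      exact ⟨α, α, hα.1, hα.2, le_refl α⟩
    | tail hij hjk ih =>
      obtain ⟨α, β, hα, hβ, hle⟩ := ih
      obtain ⟨γ, hγ⟩ := hjk
      exact ⟨α, γ, hα, hγ.2, le_of_lt (lt_of_le_of_lt hle (hsupp _ β hβ γ hγ.1))⟩
  have noloop : ∀ i, ¬ Relation.TransGen (ImmCons w) i i := by
    intro i h
    obtain ⟨α, β, hα, hβ, hle⟩ := key i i h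
    exact absurd (hsupp i β hβ α hα) (not_lt.mpr hle)
  constructor
  · rintro ⟨k, cyc, hk, hcl, hedge⟩
    apply noloop (cyc 0)
    have main : ∀ m : ℕ, (hm : m < k) →
        Relation.TransGen (ImmCons w) (cyc 0) (cyc ⟨m + 1, Nat.succ_lt_succ hm⟩) := by
      intro m
      induction m with
      | zero =>
        intro hm
        have h0 := hedge ⟨0, hm⟩
        have e1 : (⟨0, hm⟩ : Fin k).castSucc = (0 : Fin (k + 1)) := by
          ext; simp
        have e2 : (⟨0, hm⟩ : Fin k).succ = (⟨1, Nat.succ_lt_succ hm⟩ : Fin (k + 1)) := by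
          ext; simp
        rw [e1, e2] at h0
        exact Relation.TransGen.single h0
      | succ m ih =>
        intro hm
        have h1 := ih (Nat.lt_of_succ_lt hm)
        have h2 := hedge ⟨m + 1, hm⟩
        have e1 : (⟨m + 1, hm⟩ : Fin k).castSucc =
            (⟨m + 1, Nat.succ_lt_succ (Nat.lt_of_succ_lt hm)⟩ : Fin (k + 1)) := by
          ext; simp
        have e2 : (⟨m + 1, hm⟩ : Fin k).succ =
            (⟨m + 2, Nat.succ_lt_succ hm⟩ : Fin (k + 1)) := by
          ext; simp
        rw [e1, e2] at h2
        exact h1.tail h2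
    have hlast := main (k - 1) (Nat.sub_lt hk Nat.one_pos)
    have e3 : (⟨k - 1 + 1, Nat.succ_lt_succ (Nat.sub_lt hk Nat.one_pos)⟩ : Fin (k + 1)) =
        Fin.last k := by
      ext; exact Nat.succ_pred_eq_of_pos hk
    rw [e3, ← hcl] at hlast
    exact hlast
  · intro i j h1 h2
    by_contra hne
    rcases h1.cases_head with heq | ⟨c, hic, hcj⟩
    · exact hne heq
    · exact noloop i (Relation.TransGen.head' hic (hcj.trans h2))
end

section
/- Let ī and f̄ be nonnegative data vectors (finitely supported functions D → ℕ^d), and let w_1, …, w_n be integer data vectors each satisfying supp(w_i⁻) < supp(w_i⁺) (every element of the support of the negative part is strictly smaller than every element of the support of the positive part), such that ī + ∑_{i=1}^{n} w_i = f̄. Then there exists a permutation σ of {1, …, n} such that for every j ∈ {0, …, n} the partial sum ī + ∑_{i=1}^{j} w_{σ(i)} is a nonnegative data vector. -/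
lemma exists_first {D : Type*} [LinearOrder D] {d n : ℕ}
    (ibar fbar : D → Fin d → ℤ) (hinn : ∀ α x, 0 ≤ ibar α x)
    (hfnn : ∀ α x, 0 ≤ fbar α x)
    (w : Fin (n+1) → D → Fin d → ℤ) (hwfin : ∀ i, (Function.support (w i)).Finite)
    (hsupp : ∀ i, ∀ α ∈ Function.support (dvNeg (w i)),
      ∀ β ∈ Function.support (dvPos (w i)), α < β)
    (hsum : ibar + ∑ i, w i = fbar) :
    ∃ i₀, ∀ α x, 0 ≤ ibar α x + w i₀ α x := by
  classical
  by_contra h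
  push_neg at h
  set F : Fin (n+1) → Finset D := fun i =>
    (hwfin i).toFinset.filter (fun α => ∃ x, ibar α x + w i α x < 0) with hF
  have hFne : ∀ i, (F i).Nonempty := by
    intro i
    obtain ⟨α, x, hx⟩ := h i
    refine ⟨α, ?_⟩
    simp only [hF, Finset.mem_filter, Set.Finite.mem_toFinset, Function.mem_support]
    refine ⟨?_, x, hx⟩
    intro hz
    have h0 : w i α x = 0 := by rw [hz]; rfl
    have := hinn α x
    omega
  set A : Fin (n+1) → D := fun i => (F i).min' (hFne i) with hA
  have hAF : ∀ i, A i ∈ F i := fun i => (F i).min'_mem (hFne i)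
  obtain ⟨i₀, -, hmin⟩ := Finset.exists_min_image Finset.univ A ⟨0, Finset.mem_univ 0⟩
  obtain ⟨-, x₀, hx₀⟩ := Finset.mem_filter.mp (hAF i₀)
  set α₀ := A i₀
  have hs : ibar α₀ x₀ + ∑ i, w i α₀ x₀ = fbar α₀ x₀ := by
    have := congrFun (congrFun hsum α₀) x₀
    simpa using this
  have hrest : (0:ℤ) < ∑ i ∈ Finset.univ.erase i₀, w i α₀ x₀ := by
    have h2 : ∑ i ∈ Finset.univ.erase i₀, w i α₀ x₀ + w i₀ α₀ x₀ = ∑ i, w i α₀ x₀ :=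
      Finset.sum_erase_add Finset.univ (fun i => w i α₀ x₀) (Finset.mem_univ i₀)
    have := hfnn α₀ x₀
    omega
  have : ∑ i ∈ Finset.univ.erase i₀, (0:ℤ) < ∑ i ∈ Finset.univ.erase i₀, w i α₀ x₀ := by
    simpa using hrest
  obtain ⟨j, -, hj⟩ := Finset.exists_lt_of_sum_lt this
  have hpos : α₀ ∈ Function.support (dvPos (w j)) := by
    simp only [Function.mem_support]
    intro hz
    have := congrFun hz x₀
    simp only [dvPos, Pi.zero_apply] at this
    omega
  obtain ⟨-, xj, hxj⟩ := Finset.mem_filter.mp (hAF j)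
  have hneg : A j ∈ Function.support (dvNeg (w j)) := by
    simp only [Function.mem_support]
    intro hz
    have := congrFun hz xj
    simp only [dvNeg, Pi.zero_apply] at this
    have := hinn (A j) xj
    omega
  have hlt : A j < α₀ := hsupp j (A j) hneg α₀ hpos
  exact absurd (hmin j (Finset.mem_univ j)) (not_le.mpr hlt)

lemma main_aux {D : Type*} [LinearOrder D] {d : ℕ} : ∀ n : ℕ,
    ∀ ibar fbar : D → Fin d → ℤ, (∀ α x, 0 ≤ ibar α x) → (∀ α x, 0 ≤ fbar α x) →
    ∀ w : Fin n → D → Fin d → ℤ, (∀ i, (Function.support (w i)).Finite) →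
    (∀ i, ∀ α ∈ Function.support (dvNeg (w i)),
      ∀ β ∈ Function.support (dvPos (w i)), α < β) →
    ibar + ∑ i, w i = fbar →
    ∃ σ : Equiv.Perm (Fin n), ∀ j : ℕ, j ≤ n → ∀ α x,
      0 ≤ ibar α x +
        ∑ i ∈ Finset.univ.filter (fun i : Fin n => (i : ℕ) < j), w (σ i) α x := by
  intro n
  induction n with
  | zero =>
    intro ibar fbar hinn hfnn w hwfin hsupp hsum
    exact ⟨1, fun j hj α x => by simpa using hinn α x⟩
  | succ n IH =>
    intro ibar fbar hinn hfnn w hwfin hsupp hsum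
    obtain ⟨i₀, hi₀⟩ := exists_first ibar fbar hinn hfnn w hwfin hsupp hsum
    set ibar' : D → Fin d → ℤ := fun α x => ibar α x + w i₀ α x with hibar'
    set w' : Fin n → D → Fin d → ℤ := fun j => w (i₀.succAbove j) with hw'
    have hsum' : ibar' + ∑ i, w' i = fbar := by
      rw [← hsum, Fin.sum_univ_succAbove (fun i => w i) i₀]
      funext α x
      simp [hibar', hw', Finset.sum_apply]
      ring
    obtain ⟨σ', hσ'⟩ := IH ibar' fbar hi₀ hfnn w' (fun i => hwfin _) (fun i => hsupp _) hsum'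
    refine ⟨(finSuccEquiv' 0).trans (σ'.optionCongr.trans (finSuccEquiv' i₀).symm), ?_⟩
    intro j hj α x
    match j with
    | 0 => simpa using hinn α x
    | (k+1) =>
      have hk : k ≤ n := by omega
      have key := hσ' k hk α x
      rw [Finset.sum_filter, Fin.sum_univ_succ]
      have e0 : ((finSuccEquiv' 0).trans (σ'.optionCongr.trans (finSuccEquiv' i₀).symm)) 0 = i₀ := by
        simp
      have es : ∀ i : Fin n,
          ((finSuccEquiv' 0).trans (σ'.optionCongr.trans (finSuccEquiv' i₀).symm)) i.succ
            = i₀.succAbove (σ' i) := by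
        intro i
        rw [show (i.succ : Fin (n+1)) = (0:Fin (n+1)).succAbove i by rw [Fin.succAbove_zero],
          Equiv.trans_apply, Equiv.trans_apply, finSuccEquiv'_succAbove,
          Equiv.optionCongr_apply, Option.map_some, finSuccEquiv'_symm_some]
      rw [Finset.sum_filter] at key
      simp only [e0, es, Fin.val_zero, Fin.val_succ]
      simp only [Nat.zero_lt_succ, if_true, Nat.add_lt_add_iff_right]
      simp only [hibar', hw'] at key
      linarith

/-- Let `ī` and `f̄` be nonnegative finitely supported data vectors and let
`w 0, …, w (n-1)` be integer data vectors, each satisfying that every element of the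
support of its negative part is strictly smaller than every element of the support of
its positive part, such that `ī + ∑ i, w i = f̄`. Then there is a permutation `σ` of
`{0, …, n-1}` such that every partial sum `ī + ∑_(i<j) w (σ i)` is nonnegative. -/
theorem exists_perm_partial_sums_nonneg {D : Type*} [LinearOrder D] [Countable D]
    [DenselyOrdered D] [NoMinOrder D] [NoMaxOrder D] {d n : ℕ}
    (ibar fbar : D → Fin d → ℤ)
    (hifin : (Function.support ibar).Finite) (hinn : ∀ α x, 0 ≤ ibar α x)
    (hffin : (Function.support fbar).Finite) (hfnn : ∀ α x, 0 ≤ fbar α x)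
    (w : Fin n → D → Fin d → ℤ) (hwfin : ∀ i, (Function.support (w i)).Finite)
    (hsupp : ∀ i, ∀ α ∈ Function.support (dvNeg (w i)),
      ∀ β ∈ Function.support (dvPos (w i)), α < β)
    (hsum : ibar + ∑ i, w i = fbar) :
    ∃ σ : Equiv.Perm (Fin n), ∀ j : ℕ, j ≤ n → ∀ α x,
      0 ≤ ibar α x +
        ∑ i ∈ Finset.univ.filter (fun i : Fin n => (i : ℕ) < j), w (σ i) α x := by
  exact main_aux n ibar fbar hinn hfnn w hwfin hsupp hsum
end

section
/- Let 𝕄 = {M_1, …, M_k} be integer matrices of common row dimension d, with M_ℓ of column dimension c_ℓ and s = c_1 + … + c_k, and let A be an integer d×n target matrix. For a ∈ ℤ^d write C_a for the set of vectors x ∈ ℕ^s with [M_1 | … | M_k]·x = a. Suppose that for every a that is either a column of A or the zero vector there are given sets B_a ⊆ C_a and P ⊆ C_0 such that C_a = B_a + P^⊕ (every element of C_a is an element of B_a plus a finite sum of elements of P). If there exists an (A,𝕄)-multihistogram, then there exists an (A,𝕄)-multihistogram every column of which (read as a stacked vector in ℕ^s) belongs to B_0 ∪ B_{A(_,1)}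 ∪ … ∪ B_{A(_,n)} ∪ P. -/
/-! Write each column `x` of a given multihistogram as `b + p₁ + ⋯ + pₘ` with `b` in the
relevant `B a` and `pᵢ ∈ P`, and replace `x` by the consecutive columns `b, p₁, …, pₘ`.
Row sums do not change, and since the new columns refine the old ones, each new prefix sum
of a row is sandwiched between two old prefix sums, so the staircase condition survives.
The product with `M` gains only zero columns, because every `pᵢ` lies in the kernel and `b`
has the same image as `x`: it is still a 0-extension of `A`. -/

section SplitColumns

variable {c : ℕ} (m : Fin c → ℕ)

/-- Column `t` of the refined matrix is piece `i` of old column `j` when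
`splitIndex m t = toLex ⟨j, i⟩`. -/
noncomputable def splitIndex : Fin (∑ j, m j) ≃o Lex (Σ j, Fin (m j)) :=
  Fintype.orderIsoFinOfCardEq _ (by simp)

noncomputable def splitParent (t : Fin (∑ j, m j)) : Fin c := (ofLex (splitIndex m t)).1

noncomputable def splitCol {V : Type*} (v : ∀ j, Fin (m j) → V) (t : Fin (∑ j, m j)) : V :=
  v (ofLex (splitIndex m t)).1 (ofLex (splitIndex m t)).2

@[elab_as_elim]
theorem splitIndex_induction {motive : Fin (∑ j, m j) → Prop}
    (h : ∀ j i, motive ((splitIndex m).symm (toLex ⟨j, i⟩))) (t : Fin (∑ j, m j)) :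
    motive t :=
  (splitIndex m).symm_apply_apply t ▸ h _ _

@[simp]
theorem splitParent_symm_toLex (j : Fin c) (i : Fin (m j)) :
    splitParent m ((splitIndex m).symm (toLex ⟨j, i⟩)) = j := by
  simp [splitParent]

@[simp]
theorem splitCol_symm_toLex {V : Type*} (v : ∀ j, Fin (m j) → V) (j : Fin c) (i : Fin (m j)) :
    splitCol m v ((splitIndex m).symm (toLex ⟨j, i⟩)) = v j i := by
  unfold splitCol
  rw [OrderIso.apply_symm_apply]
  rfl

theorem monotone_splitParent : Monotone (splitParent m) := fun _ _ h =>
  (Sigma.Lex.le_def.mp ((splitIndex m).monotone h)).elim le_of_lt fun h => h.1.le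

theorem strictMono_splitIndex_symm (s : ∀ j, Fin (m j)) :
    StrictMono fun j => (splitIndex m).symm (toLex ⟨j, s j⟩) :=
  (splitIndex m).symm.strictMono.comp fun _ _ h => Sigma.Lex.lt_def.mpr (Or.inl h)

theorem sum_filter_splitParent_eq {V : Type*} [AddCommMonoid V] (v : ∀ j, Fin (m j) → V)
    (j : Fin c) : ∑ t with splitParent m t = j, splitCol m v t = ∑ i, v j i := by
  rw [Finset.sum_filter, ← (splitIndex m).symm.toEquiv.sum_comp, ← toLex.sum_comp,
    Fintype.sum_sigma]
  simp

end SplitColumns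

theorem IsHistogram.of_monotone_fiberwise {r c c' : ℕ} {H : Matrix (Fin r) (Fin c) ℤ} {s : ℕ}
    (hH : IsHistogram H s) {g : Fin c' → Fin c} (hg : Monotone g)
    {Y : Matrix (Fin r) (Fin c') ℤ} (hY : ∀ i t, 0 ≤ Y i t)
    (hfib : ∀ i j, ∑ t with g t = j, Y i t = H i j) : IsHistogram Y s := by
  obtain ⟨hs, -, hrow, hstair⟩ := hH
  have hprefix (i : Fin r) (J : ℕ) :
      ∑ t ∈ Finset.univ.filter (fun t : Fin c' => (g t : ℕ) < J), Y i t =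
        ∑ j ∈ Finset.univ.filter (fun j : Fin c => (j : ℕ) < J), H i j := by
    simp_rw [← hfib, Finset.sum_fiberwise_eq_sum_filter, Finset.mem_filter_univ]
  refine ⟨hs, hY, fun i => ?_, fun i t hi ht => ?_⟩
  · rw [← hrow i, ← Finset.sum_fiberwise Finset.univ g]
    simp only [hfib]
  set t' : Fin c' := ⟨t, ht⟩
  have hi' := Nat.lt_of_succ_lt hi
  calc ∑ l ∈ Finset.univ.filter (fun l : Fin c' => (l : ℕ) < t + 1), Y ⟨i + 1, hi⟩ l
      ≤ ∑ l ∈ Finset.univ.filter (fun l : Fin c' => (g l : ℕ) < g t' + 1),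
          Y ⟨i + 1, hi⟩ l := by
        refine Finset.sum_le_sum_of_subset_of_nonneg (fun l hl => ?_) fun l _ _ => hY _ l
        simp only [Finset.mem_filter_univ] at hl ⊢
        exact Nat.lt_succ_of_le (hg (Fin.mk_le_mk.mpr (by omega)) : g l ≤ g t')
    _ = ∑ j ∈ Finset.univ.filter (fun j : Fin c => (j : ℕ) < g t' + 1), H ⟨i + 1, hi⟩ j :=
        hprefix _ _
    _ ≤ ∑ j ∈ Finset.univ.filter (fun j : Fin c => (j : ℕ) < g t'), H ⟨i, hi'⟩ j :=
        hstair _ _ hi (g t').isLt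
    _ = ∑ l ∈ Finset.univ.filter (fun l : Fin c' => (g l : ℕ) < g t'), Y ⟨i, hi'⟩ l :=
        (hprefix _ _).symm
    _ ≤ ∑ l ∈ Finset.univ.filter (fun l : Fin c' => (l : ℕ) < t), Y ⟨i, hi'⟩ l := by
        refine Finset.sum_le_sum_of_subset_of_nonneg (fun l hl => ?_) fun l _ _ => hY _ l
        simp only [Finset.mem_filter_univ] at hl ⊢
        exact hg.reflect_lt (Fin.lt_def.mpr hl)

theorem IsHistogram.splitCols {r c : ℕ} {H : Matrix (Fin r) (Fin c) ℤ} {s : ℕ}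
    (hH : IsHistogram H s) {m : Fin c → ℕ} {v : ∀ j, Fin (m j) → Fin r → ℤ}
    (hv : ∀ j i q, 0 ≤ v j i q) (hsum : ∀ j, ∑ i, v j i = fun q => H q j) :
    IsHistogram (fun q t => splitCol m v t q) s :=
  hH.of_monotone_fiberwise (monotone_splitParent m) (fun q _ => hv _ _ q) fun q j => by
    rw [← congrFun (hsum j) q, ← sum_filter_splitParent_eq m v j, Finset.sum_apply]

theorem IsZeroExt.col_eq_zero_or_exists {d n c : ℕ} {A : Matrix (Fin d) (Fin n) ℤ}
    {N : Matrix (Fin d) (Fin c) ℤ} (h : IsZeroExt A N) (j : Fin c) :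
    (fun i => N i j) = 0 ∨ ∃ j', (fun i => N i j) = fun i => A i j' := by
  obtain ⟨f, -, hagree, hzero⟩ := h
  by_cases hj : ∃ j', f j' = j
  · obtain ⟨j', rfl⟩ := hj
    exact Or.inr ⟨j', funext fun i => hagree i j'⟩
  · exact Or.inl (funext fun i => hzero i j fun j' h => hj ⟨j', h⟩)

theorem IsZeroExt.splitCols {d n c : ℕ} {A : Matrix (Fin d) (Fin n) ℤ}
    {N : Matrix (Fin d) (Fin c) ℤ} (hN : IsZeroExt A N) (m : Fin c → ℕ)
    {N' : Matrix (Fin d) (Fin (∑ j, (m j + 1))) ℤ}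
    (hhead : ∀ i j, N' i ((splitIndex (m · + 1)).symm (toLex ⟨j, 0⟩)) = N i j)
    (htail : ∀ i j (r : Fin (m j)),
      N' i ((splitIndex (m · + 1)).symm (toLex ⟨j, r.succ⟩)) = 0) :
    IsZeroExt A N' := by
  obtain ⟨f, hf, hagree, hzero⟩ := hN
  refine ⟨fun j => (splitIndex (m · + 1)).symm (toLex ⟨f j, 0⟩),
    (strictMono_splitIndex_symm _ fun _ => 0).comp hf, fun i j => by rw [hhead, hagree],
    fun i t ht => ?_⟩
  induction t using splitIndex_induction with | h j r => ?_
  induction r using Fin.cases with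
  | zero => exact (hhead i j).trans (hzero i j fun j' hj' => ht j' (hj' ▸ rfl))
  | succ r => exact htail i j r

theorem sum_mul_apply_eq_sum_sigma {ι R m n : Type*} [Fintype ι] {κ : ι → Type*}
    [∀ ℓ, Fintype (κ ℓ)] [NonUnitalNonAssocSemiring R] (M : ∀ ℓ, Matrix m (κ ℓ) R)
    (H : ∀ ℓ, Matrix (κ ℓ) n R) (i : m) (j : n) :
    (∑ ℓ, M ℓ * H ℓ) i j = ∑ p : Σ ℓ, κ ℓ, M p.1 i p.2 * H p.1 p.2 j := by
  simp [Matrix.sum_apply, Matrix.mul_apply, Fintype.sum_sigma]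

theorem exists_fin_sum_eq_of_mem_add_closure {V : Type*} [AddCommMonoid V] {B P : Set V} {x : V}
    (hx : ∃ b ∈ B, ∃ q ∈ AddSubmonoid.closure P, x = b + q) :
    ∃ (m : ℕ) (v : Fin (m + 1) → V),
      v 0 ∈ B ∧ (∀ r : Fin m, v r.succ ∈ P) ∧ ∑ i, v i = x := by
  obtain ⟨b, hb, q, hq, rfl⟩ := hx
  obtain ⟨L, hL, rfl⟩ := AddSubmonoid.exists_list_of_mem_closure hq
  refine ⟨L.length, Fin.cons b L.get, hb, fun r => hL _ (List.get_mem ..), ?_⟩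
  rw [Fin.sum_cons, ← List.sum_ofFn, List.ofFn_get]

/-- Let `M 0, …, M (k-1)` be integer matrices of common row dimension `d`, `M ℓ` of
column dimension `cdim ℓ`, and let `A` be an integer `d × n` target matrix. For
`a ∈ ℤ^d`, `C a` is the set of nonnegative integer vectors `x` (indexed by the disjoint
union of the column index sets, of total size `s = cdim 0 + … + cdim (k-1)`) with
`[M 0 | … | M (k-1)] * x = a`. Suppose for every `a` that is a column of `A` or zero we
are given `B a ⊆ C a` and `P ⊆ C 0` with `C a = B a + P^⊕` (`P^⊕` being the additive
closure of `P`, i.e. the set of finite sums of elements of `P`). If there exists an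
`(A, M)`-multihistogram, then there exists an `(A, M)`-multihistogram every column of
which (read as a stacked vector) belongs to `B 0 ∪ B (A _ 0) ∪ … ∪ B (A _ (n-1)) ∪ P`. -/
theorem multihistogram_columns_bounded {d k n : ℕ} (cdim : Fin k → ℕ)
    (M : ∀ ℓ : Fin k, Matrix (Fin d) (Fin (cdim ℓ)) ℤ)
    (A : Matrix (Fin d) (Fin n) ℤ)
    (P : Set ((Σ ℓ : Fin k, Fin (cdim ℓ)) → ℤ))
    (B : (Fin d → ℤ) → Set ((Σ ℓ : Fin k, Fin (cdim ℓ)) → ℤ))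
    (hP : ∀ x ∈ P, (∀ p, 0 ≤ x p) ∧
      (∀ i, ∑ p : Σ ℓ : Fin k, Fin (cdim ℓ), M p.1 i p.2 * x p = 0))
    (hB : ∀ a : Fin d → ℤ, (a = 0 ∨ ∃ j : Fin n, a = fun i => A i j) →
      (∀ x ∈ B a, (∀ p, 0 ≤ x p) ∧
        (∀ i, ∑ p : Σ ℓ : Fin k, Fin (cdim ℓ), M p.1 i p.2 * x p = a i)) ∧
      (∀ x : (Σ ℓ : Fin k, Fin (cdim ℓ)) → ℤ,
        ((∀ p, 0 ≤ x p) ∧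
          (∀ i, ∑ p : Σ ℓ : Fin k, Fin (cdim ℓ), M p.1 i p.2 * x p = a i)) ↔
        ∃ b ∈ B a, ∃ q ∈ AddSubmonoid.closure P, x = b + q))
    (hex : ∃ (c : ℕ) (H : ∀ ℓ : Fin k, Matrix (Fin (cdim ℓ)) (Fin c) ℤ),
      (∀ ℓ, ∃ s : ℕ, IsHistogram (H ℓ) s) ∧ IsZeroExt A (∑ ℓ, M ℓ * H ℓ)) :
    ∃ (c : ℕ) (H : ∀ ℓ : Fin k, Matrix (Fin (cdim ℓ)) (Fin c) ℤ),
      (∀ ℓ, ∃ s : ℕ, IsHistogram (H ℓ) s) ∧ IsZeroExt A (∑ ℓ, M ℓ * H ℓ) ∧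
      ∀ j : Fin c, (fun p : Σ ℓ : Fin k, Fin (cdim ℓ) => H p.1 p.2 j) ∈
        B 0 ∪ (⋃ j' : Fin n, B (fun i => A i j')) ∪ P := by
  obtain ⟨c, H, hH, hZ⟩ := hex
  have hC j := hB _ (hZ.col_eq_zero_or_exists j)
  have hdecomp (j : Fin c) := exists_fin_sum_eq_of_mem_add_closure (((hC j).2 _).mp
    ⟨fun p => (hH p.1).choose_spec.2.1 p.2 j,
      fun i => (sum_mul_apply_eq_sum_sigma M H i j).symm⟩)
  choose m v hv_head hv_tail hv_sum using hdecomp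
  have hv_nonneg j i p : 0 ≤ v j i p := by
    cases i using Fin.cases
    exacts [((hC j).1 _ (hv_head j)).1 p, (hP _ (hv_tail j _)).1 p]
  have hv_mem j i : v j i ∈ B 0 ∪ (⋃ j' : Fin n, B (fun i => A i j')) ∪ P := by
    cases i using Fin.cases
    · rcases hZ.col_eq_zero_or_exists j with h | ⟨j', h⟩
      · exact .inl (.inl (h ▸ hv_head j))
      · exact .inl (.inr (Set.mem_iUnion.mpr ⟨j', h ▸ hv_head j⟩))
    · exact .inr (hv_tail j _)
  refine ⟨_, fun ℓ q t => splitCol _ v t ⟨ℓ, q⟩, fun ℓ => ?_, ?_, fun t => hv_mem _ _⟩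
  · obtain ⟨s, hs⟩ := hH ℓ
    refine ⟨s, hs.splitCols (fun j i q => hv_nonneg j i ⟨ℓ, q⟩) fun j => ?_⟩
    funext q
    simpa only [Finset.sum_apply] using congrFun (hv_sum j) ⟨ℓ, q⟩
  · refine hZ.splitCols m (fun i j => (sum_mul_apply_eq_sum_sigma M _ i _).trans ?_)
      fun i j r => (sum_mul_apply_eq_sum_sigma M _ i _).trans ?_
    · simpa only [splitCol_symm_toLex] using ((hC j).1 _ (hv_head j)).2 i
    · simpa only [splitCol_symm_toLex] using (hP _ (hv_tail j r)).2 i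
end
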